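/- arXiv:2404.04865 — 4 statements merged into one kernel-verified Lean document; each statement's English description precedes it below -/
import Mathlib

section
/- Let R be a ranking function space, 𝒟 a domain space, and let D_XY = β·D_I + (1−β)·D_O and D_XY' = β'·D_I + (1−β')·D_O' be domains in 𝒟 sharing the same ID joint distribution D_I. Suppose D_{X_I} = ∫ g_I dμ, D_{X_O} = ∫ g_O dμ and D_{X_O}' = ∫ g_O' dμ for densities with respect to a common measure μ on X, and set P = {x : g_I(x) > 0 and g_O(x) > 0} and P' = {x : g_I(x) > 0 and g_O'(x) > 0}. If sup_{r∈R} AUC(r; D_{X_I}, D_{X_O}) = sup_{r∈R_all} AUC(r; D_{X_I}, D_{X_O}) and sup_{r∈R} AUC(r; D_{X_I}, D_{X_O}') = sup_{r∈R_all} AUC(r; D_{X_I}, D_{X_O}'), where R_all is the space of all measurable functions X → ℝ, and D_{X_I}(P ∩ P') < min{D_{X_I}(P), D_{X_I}(P')}, then the linear condition under AUC fails for this pair, i.e., there exists α ∈ [0,1) with α·sup_{r∈R} AUC(r; D_{X_I}, D_{X_O}) + (1−α)·sup_{r∈R} AUC(r; D_{X_I}, D_{X_O}') ≠ sup_{r∈R}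 AUC(r; D_{X_I}, α·D_{X_O} + (1−α)·D_{X_O}'); consequently, OOD detection is not learnable under AUC in 𝒟 for R. -/
/-!
Write `AUC r P Q = 1 - L(r; P, Q)`, where `L` is the probability that `r` ranks an ID point
`x ~ P` below an OOD point `x' ~ Q`, ties counting `1/2`. Away from the overlap `S` of the
supports of `P` and `Q` the two can be separated perfectly, so the best measurable AUC depends
only on how `S` is ranked. Hence the regret of `r` against `Q` is at least its misranking loss
between ID points in `S' \ S` and OOD points in `S \ S'`, and its regret against `Q'` at least
the loss with the roles of these two sets exchanged. Both sets carry ID mass, so they carry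
nonzero common minorants `ν` of `P` and `Q` and `ν'` of `P` and `Q'`, and the two losses
`L(r; ν', ν) + L(r; ν, ν')` add up to `ν(X) ν'(X) > 0` whatever `r` is.

So no ranking is close to optimal for both `D` and `D'`. A learner sees the same samples from
both, hence its expected regrets cannot both tend to zero; and the best AUC against a mixture
of the two OOD marginals stays strictly below the mixture of the best AUCs.
-/

open MeasureTheory Filter Set
open scoped ENNReal NNReal

noncomputable section

namespace OODF

/-- A *domain*: a mixture `(1-π)·D_I + π·D_O` of an ID joint distribution `D_I` on
`𝒳 × {1,…,K}` and an OOD joint distribution `D_O` on `𝒳 × {K+1}`, with class prior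
`π ∈ [0,1)`.  Labels are encoded as naturals: ID labels are `{1,…,K}`, OOD label is `K+1`. -/
structure Domain (𝒳 : Type*) [MeasurableSpace 𝒳] (K : ℕ) where
  DI : Measure (𝒳 × ℕ)
  DO : Measure (𝒳 × ℕ)
  prior : ℝ
  probI : IsProbabilityMeasure DI
  probO : IsProbabilityMeasure DO
  suppI : DI {p | p.2 ∉ Set.Icc 1 K} = 0
  suppO : DO {p | p.2 ≠ K + 1} = 0
  prior_mem : prior ∈ Set.Ico (0 : ℝ) 1

variable {𝒳 : Type*} [MeasurableSpace 𝒳] {K : ℕ}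

namespace Domain

/-- the mixed joint distribution `D_XY = (1-π)·D_I + π·D_O` -/
def joint (D : Domain 𝒳 K) : Measure (𝒳 × ℕ) :=
  ENNReal.ofReal (1 - D.prior) • D.DI + ENNReal.ofReal D.prior • D.DO

/-- the marginal `D_{X_I}` of the ID joint distribution on the feature space -/
def margI (D : Domain 𝒳 K) : Measure 𝒳 := D.DI.map Prod.fst

/-- the marginal `D_{X_O}` of the OOD joint distribution on the feature space -/
def margO (D : Domain 𝒳 K) : Measure 𝒳 := D.DO.map Prod.fst

/-- the domain `D^α = (1-α)·D_I + α·D_O`, i.e. `D` with its class prior replaced by `α` -/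
def withPrior (D : Domain 𝒳 K) (α : Set.Ico (0 : ℝ) 1) : Domain 𝒳 K :=
  { D with prior := α.1, prior_mem := α.2 }

end Domain

/-- a prior-unknown domain space: closed under changing the class prior -/
def PriorUnknown (𝒟 : Set (Domain 𝒳 K)) : Prop :=
  ∀ D ∈ 𝒟, ∀ α : Set.Ico (0 : ℝ) 1, D.withPrior α ∈ 𝒟

/-- the risk `R_D(h)` w.r.t. the mixed joint distribution -/
def risk (ℓ : ℕ → ℕ → ℝ) (D : Domain 𝒳 K) (h : 𝒳 → ℕ) : ℝ :=
  ∫ p, ℓ (h p.1) p.2 ∂D.joint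

/-- the ID risk `R_D^in(h)` -/
def riskIn (ℓ : ℕ → ℕ → ℝ) (D : Domain 𝒳 K) (h : 𝒳 → ℕ) : ℝ :=
  ∫ p, ℓ (h p.1) p.2 ∂D.DI

/-- the OOD risk `R_D^out(h)` -/
def riskOut (ℓ : ℕ → ℕ → ℝ) (D : Domain 𝒳 K) (h : 𝒳 → ℕ) : ℝ :=
  ∫ p, ℓ (h p.1) (K + 1) ∂D.DO

/-- the `α`-risk `R_D^α(h) = (1-α)·R_D^in(h) + α·R_D^out(h)` -/
def riskA (ℓ : ℕ → ℕ → ℝ) (D : Domain 𝒳 K) (h : 𝒳 → ℕ) (α : ℝ) : ℝ :=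
  (1 - α) * riskIn ℓ D h + α * riskOut ℓ D h

/-- the distribution of an i.i.d. sample of size `n` from the ID joint distribution -/
def sampleMeasure (D : Domain 𝒳 K) (n : ℕ) : Measure (Fin n → 𝒳 × ℕ) :=
  letI := D.probI
  Measure.pi fun _ => D.DI

/-- An algorithm maps, for every sample size `n ≥ 1`, a labeled sample to a function on `𝒳`. -/
abbrev Algorithm (𝒳 β : Type*) := (n : ℕ) → (Fin n → 𝒳 × ℕ) → (𝒳 → β)

/-- `A` is consistent w.r.t. `𝒟` under risk with rate `ε`: it outputs hypotheses in `H`,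
the resulting risks are measurable in the sample, and the expected excess risk for samples
of size `n ≥ 1` is at most `ε n`. -/
def ConsistentRisk (ℓ : ℕ → ℕ → ℝ) (𝒟 : Set (Domain 𝒳 K)) (H : Set (𝒳 → ℕ))
    (A : Algorithm 𝒳 ℕ) (ε : ℕ → ℝ) : Prop :=
  (∀ n : ℕ, 1 ≤ n → ∀ S, A n S ∈ H) ∧
  (∀ D ∈ 𝒟, ∀ n : ℕ, 1 ≤ n → Measurable fun S : Fin n → 𝒳 × ℕ => risk ℓ D (A n S)) ∧
  ∀ D ∈ 𝒟, ∀ n : ℕ, 1 ≤ n →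
    ∫ S, (risk ℓ D (A n S) - ⨅ h : H, risk ℓ D h.1) ∂(sampleMeasure D n) ≤ ε n

/-- OOD detection is learnable under risk in `𝒟` for `H` with the given rate. -/
def LearnableRiskRate (ℓ : ℕ → ℕ → ℝ) (𝒟 : Set (Domain 𝒳 K)) (H : Set (𝒳 → ℕ))
    (ε : ℕ → ℝ) : Prop :=
  ∃ A, ConsistentRisk ℓ 𝒟 H A ε

/-- learnability of OOD detection under risk -/
def LearnableRisk (ℓ : ℕ → ℕ → ℝ) (𝒟 : Set (Domain 𝒳 K)) (H : Set (𝒳 → ℕ)) : Prop :=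
  ∃ ε : ℕ → ℝ, Antitone ε ∧ Tendsto ε atTop (nhds 0) ∧ LearnableRiskRate ℓ 𝒟 H ε

/-- `A` is strongly consistent: the expected excess `α`-risks are uniformly small over
all `α ∈ [0,1]`. -/
def StrongConsistentRisk (ℓ : ℕ → ℕ → ℝ) (𝒟 : Set (Domain 𝒳 K)) (H : Set (𝒳 → ℕ))
    (A : Algorithm 𝒳 ℕ) (ε : ℕ → ℝ) : Prop :=
  (∀ n : ℕ, 1 ≤ n → ∀ S, A n S ∈ H) ∧
  (∀ D ∈ 𝒟, ∀ n : ℕ, 1 ≤ n → ∀ α : ℝ,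
    Measurable fun S : Fin n → 𝒳 × ℕ => riskA ℓ D (A n S) α) ∧
  ∀ D ∈ 𝒟, ∀ n : ℕ, 1 ≤ n → ∀ α ∈ Set.Icc (0 : ℝ) 1,
    ∫ S, (riskA ℓ D (A n S) α - ⨅ h : H, riskA ℓ D h.1 α) ∂(sampleMeasure D n) ≤ ε n

/-- strong learnability of OOD detection under risk -/
def StrongLearnableRisk (ℓ : ℕ → ℕ → ℝ) (𝒟 : Set (Domain 𝒳 K)) (H : Set (𝒳 → ℕ)) : Prop :=
  ∃ ε : ℕ → ℝ, Antitone ε ∧ Tendsto ε atTop (nhds 0) ∧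
    ∃ A, StrongConsistentRisk ℓ 𝒟 H A ε

/-- the AUC of a ranking function `r` w.r.t. ID marginal `P` and OOD marginal `Q`:
`AUC(r) = E_{x ~ P} E_{x' ~ Q} [1_{r(x) > r(x')} + (1/2)·1_{r(x) = r(x')}]` -/
def AUC (r : 𝒳 → ℝ) (P Q : Measure 𝒳) : ℝ :=
  ∫ x, (∫ x', ((if r x' < r x then (1 : ℝ) else 0) +
      (1 / 2) * (if r x = r x' then (1 : ℝ) else 0)) ∂Q) ∂P

/-- `A` is AUC-consistent w.r.t. `𝒟` with rate `ε`. -/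
def ConsistentAUC (𝒟 : Set (Domain 𝒳 K)) (R : Set (𝒳 → ℝ))
    (A : Algorithm 𝒳 ℝ) (ε : ℕ → ℝ) : Prop :=
  (∀ n : ℕ, 1 ≤ n → ∀ S, A n S ∈ R) ∧
  (∀ D ∈ 𝒟, ∀ n : ℕ, 1 ≤ n →
    Measurable fun S : Fin n → 𝒳 × ℕ => AUC (A n S) D.margI D.margO) ∧
  ∀ D ∈ 𝒟, ∀ n : ℕ, 1 ≤ n →
    ∫ S, ((⨆ r : R, AUC r.1 D.margI D.margO) - AUC (A n S) D.margI D.margO)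
      ∂(sampleMeasure D n) ≤ ε n

/-- OOD detection is learnable under AUC in `𝒟` for `R` with the given rate. -/
def LearnableAUCRate (𝒟 : Set (Domain 𝒳 K)) (R : Set (𝒳 → ℝ)) (ε : ℕ → ℝ) : Prop :=
  ∃ A, ConsistentAUC 𝒟 R A ε

/-- learnability of OOD detection under AUC -/
def LearnableAUC (𝒟 : Set (Domain 𝒳 K)) (R : Set (𝒳 → ℝ)) : Prop :=
  ∃ ε : ℕ → ℝ, Antitone ε ∧ Tendsto ε atTop (nhds 0) ∧ LearnableAUCRate 𝒟 R ε

/-- the (topological) support of a measure -/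
def mSupport {α : Type*} [TopologicalSpace α] [MeasurableSpace α] (μ : Measure α) : Set α :=
  {x | ∀ U ∈ nhds x, 0 < μ U}

/-- the separate space `𝒟^s`: all domains whose ID and OOD marginals have disjoint supports -/
def separateSpace (𝒳 : Type*) [MeasurableSpace 𝒳] [TopologicalSpace 𝒳] (K : ℕ) :
    Set (Domain 𝒳 K) :=
  {D | mSupport D.margO ∩ mSupport D.margI = ∅}

/-- a class `G` of binary functions (encoded as predicates) shatters the finite set `C` -/
def Shatters {α : Type*} (G : Set (α → Prop)) (C : Finset α) : Prop :=
  ∀ f : α → Prop, ∃ g ∈ G, ∀ x ∈ C, g x ↔ f x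

/-- the VC dimension of a class of binary functions (encoded as predicates) -/
def VCdim {α : Type*} (G : Set (α → Prop)) : ℕ∞ :=
  sSup {n : ℕ∞ | ∃ C : Finset α, Shatters G C ∧ n = (C.card : ℕ∞)}

section Ranking

variable {Ω : Type*}

def misrank (r : Ω → ℝ) (x x' : Ω) : ℝ≥0∞ :=
  if r x < r x' then 1 else if r x = r x' then 2⁻¹ else 0

lemma misrank_add_misrank_swap (r : Ω → ℝ) (x x' : Ω) :
    misrank r x x' + misrank r x' x = 1 := by
  rcases lt_trichotomy (r x) (r x') with h | h | h
  · simp [misrank, h, h.not_gt, h.ne']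
  · simp [misrank, h, ENNReal.inv_two_add_inv_two]
  · simp [misrank, h, h.not_gt, h.ne']

lemma misrank_le_one (r : Ω → ℝ) (x x' : Ω) : misrank r x x' ≤ 1 :=
  misrank_add_misrank_swap r x x' ▸ le_self_add

variable [MeasurableSpace Ω]

def misrankLoss (r : Ω → ℝ) (P Q : Measure Ω) : ℝ≥0∞ :=
  ∫⁻ x, ∫⁻ x', misrank r x x' ∂Q ∂P

lemma measurable_misrank {r : Ω → ℝ} (hr : Measurable r) :
    Measurable (Function.uncurry (misrank r)) :=
  Measurable.ite (measurableSet_lt (hr.comp measurable_fst) (hr.comp measurable_snd))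
    measurable_const <| Measurable.ite
      (measurableSet_eq_fun (hr.comp measurable_fst) (hr.comp measurable_snd))
      measurable_const measurable_const

lemma misrankLoss_mono (r : Ω → ℝ) {P P' Q Q' : Measure Ω} (hP : P ≤ P') (hQ : Q ≤ Q') :
    misrankLoss r P Q ≤ misrankLoss r P' Q' :=
  lintegral_mono' hP fun _ => lintegral_mono' hQ le_rfl

lemma misrankLoss_add_left (r : Ω → ℝ) (P P' Q : Measure Ω) :
    misrankLoss r (P + P') Q = misrankLoss r P Q + misrankLoss r P' Q :=
  lintegral_add_measure _ P P'

lemma misrankLoss_smul_left (r : Ω → ℝ) (c : ℝ≥0∞) (P Q : Measure Ω) :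
    misrankLoss r (c • P) Q = c * misrankLoss r P Q :=
  lintegral_smul_measure c _

lemma misrankLoss_add_misrankLoss_swap {r : Ω → ℝ} (hr : Measurable r)
    (P Q : Measure Ω) [SFinite P] [SFinite Q] :
    misrankLoss r P Q + misrankLoss r Q P = P univ * Q univ := by
  have hm := measurable_misrank hr
  have hswap : misrankLoss r Q P = ∫⁻ x, ∫⁻ x', misrank r x' x ∂Q ∂P :=
    lintegral_lintegral_swap hm.aemeasurable
  rw [hswap, misrankLoss, ← lintegral_add_left hm.lintegral_prod_right]
  have hpt : ∀ x, ∫⁻ x', misrank r x x' ∂Q + ∫⁻ x', misrank r x' x ∂Q = Q univ := fun x => by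
    have hx : Measurable (misrank r x) := hm.comp measurable_prodMk_left
    rw [← lintegral_add_left hx]
    simp [misrank_add_misrank_swap]
  simp [hpt, mul_comm]

lemma misrankLoss_le (r : Ω → ℝ) (P Q : Measure Ω) :
    misrankLoss r P Q ≤ P univ * Q univ := by
  calc misrankLoss r P Q ≤ ∫⁻ _, ∫⁻ _, 1 ∂Q ∂P :=
        lintegral_mono fun x => lintegral_mono fun x' => misrank_le_one r x x'
    _ = P univ * Q univ := by simp [mul_comm]

lemma misrankLoss_ne_top (r : Ω → ℝ) (P Q : Measure Ω) [IsFiniteMeasure P]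
    [IsFiniteMeasure Q] :
    misrankLoss r P Q ≠ ⊤ :=
  ne_top_of_le_ne_top (by finiteness) (misrankLoss_le r P Q)

lemma AUC_eq_toReal_misrankLoss {r : Ω → ℝ} (hr : Measurable r) (P Q : Measure Ω)
    [SFinite P] [IsFiniteMeasure Q] : AUC r P Q = (misrankLoss r Q P).toReal := by
  have hm := measurable_misrank hr
  have hkernel : ∀ x x', ((if r x' < r x then (1 : ℝ) else 0) +
      (1 / 2) * (if r x = r x' then (1 : ℝ) else 0)) = (misrank r x' x).toReal := by
    intro x x'
    rcases lt_trichotomy (r x') (r x) with h | h | h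
    · simp [misrank, h, h.ne']
    · simp [misrank, h]
    · simp [misrank, h.not_gt, h.ne', h.ne]
  have hinner : ∀ x, ∫ x', (misrank r x' x).toReal ∂Q = (∫⁻ x', misrank r x' x ∂Q).toReal :=
    fun x => integral_toReal (hm.comp measurable_prodMk_right).aemeasurable
      (ae_of_all _ fun x' => (misrank_le_one r x' x).trans_lt ENNReal.one_lt_top)
  have hbound : ∀ x, ∫⁻ x', misrank r x' x ∂Q < ⊤ := fun x =>
    calc ∫⁻ x', misrank r x' x ∂Q ≤ ∫⁻ _, 1 ∂Q := lintegral_mono fun x' => misrank_le_one r x' x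
      _ < ⊤ := by simp
  have houter : Measurable fun x => ∫⁻ x', misrank r x' x ∂Q :=
    (hm.comp measurable_swap).lintegral_prod_right'
  simp_rw [AUC, hkernel, hinner]
  rw [integral_toReal houter.aemeasurable (ae_of_all _ hbound), misrankLoss,
    lintegral_lintegral_swap hm.aemeasurable]

lemma AUC_eq_one_sub_misrankLoss {r : Ω → ℝ} (hr : Measurable r) (P Q : Measure Ω)
    [IsProbabilityMeasure P] [IsProbabilityMeasure Q] :
    AUC r P Q = 1 - (misrankLoss r P Q).toReal := by
  have hsum := misrankLoss_add_misrankLoss_swap hr P Q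
  simp only [measure_univ, mul_one] at hsum
  rw [AUC_eq_toReal_misrankLoss hr, eq_sub_iff_add_eq, add_comm,
    ← ENNReal.toReal_add (misrankLoss_ne_top r P Q) (misrankLoss_ne_top r Q P), hsum,
    ENNReal.toReal_one]

lemma AUC_mem_Icc {r : Ω → ℝ} (hr : Measurable r) (P Q : Measure Ω)
    [IsProbabilityMeasure P] [IsProbabilityMeasure Q] : AUC r P Q ∈ Icc 0 1 := by
  refine ⟨AUC_eq_toReal_misrankLoss hr P Q ▸ ENNReal.toReal_nonneg, ?_⟩
  rw [AUC_eq_one_sub_misrankLoss hr]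
  linarith [ENNReal.toReal_nonneg (a := misrankLoss r P Q)]

lemma AUC_const (c : ℝ) (P Q : Measure Ω) [IsProbabilityMeasure P] [IsProbabilityMeasure Q] :
    AUC (fun _ => c) P Q = 1 / 2 := by
  simp [AUC]

lemma AUC_mix {r : Ω → ℝ} (hr : Measurable r) (P Q Q' : Measure Ω)
    [IsFiniteMeasure P] [IsFiniteMeasure Q] [IsFiniteMeasure Q'] {α : ℝ} (hα : α ∈ Icc 0 1) :
    AUC r P (ENNReal.ofReal α • Q + ENNReal.ofReal (1 - α) • Q')
      = α * AUC r P Q + (1 - α) * AUC r P Q' := by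
  have := Q.smul_finite (ENNReal.ofReal_ne_top (r := α))
  have := Q'.smul_finite (ENNReal.ofReal_ne_top (r := 1 - α))
  rw [AUC_eq_toReal_misrankLoss hr, AUC_eq_toReal_misrankLoss hr, AUC_eq_toReal_misrankLoss hr,
    misrankLoss_add_left, misrankLoss_smul_left, misrankLoss_smul_left,
    ENNReal.toReal_add (ENNReal.mul_ne_top ENNReal.ofReal_ne_top (misrankLoss_ne_top r Q P))
      (ENNReal.mul_ne_top ENNReal.ofReal_ne_top (misrankLoss_ne_top r Q' P)),
    ENNReal.toReal_mul, ENNReal.toReal_mul, ENNReal.toReal_ofReal hα.1,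
    ENNReal.toReal_ofReal (sub_nonneg.2 hα.2)]

/-- Only the ranking on the overlap `A ∩ B` of the supports matters: outside it, `r` places the
rest of `A` above everything and the rest of `B` below everything, so no pair is misranked. -/
lemma exists_misrankLoss_eq_restrict_inter {P Q : Measure Ω} {A B : Set Ω}
    (hA : MeasurableSet A) (hB : MeasurableSet B) (hPA : ∀ᵐ x ∂P, x ∈ A) (hQB : ∀ᵐ x ∂Q, x ∈ B)
    {f : Ω → ℝ} (hf : Measurable f) :
    ∃ r : Ω → ℝ, Measurable r ∧
      misrankLoss r P Q = misrankLoss f (P.restrict (A ∩ B)) (Q.restrict (A ∩ B)) := by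
  classical
  set S := A ∩ B
  have hS : MeasurableSet S := hA.inter hB
  set r : Ω → ℝ := fun x => if x ∈ S then Real.arctan (f x) else if x ∈ A then 2 else -2
  have harctan : ∀ t, -2 < Real.arctan t ∧ Real.arctan t < 2 := fun t =>
    ⟨by linarith [Real.neg_pi_div_two_lt_arctan t, Real.pi_le_four],
      by linarith [Real.arctan_lt_pi_div_two t, Real.pi_le_four]⟩
  have hpoint : ∀ x ∈ A, ∀ x' ∈ B,
      misrank r x x' = S.indicator (fun y => S.indicator (misrank f y) x') x := by
    intro x hxA x' hx'B
    by_cases hx : x ∈ S <;> by_cases hx' : x' ∈ S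
    · simp [misrank, r, hx, hx', Real.arctan_strictMono.lt_iff_lt,
        Real.arctan_injective.eq_iff]
    · have hx'A : x' ∉ A := fun h => hx' ⟨h, hx'B⟩
      have := (harctan (f x)).1
      simp [misrank, r, hx, hx', hx'A, this.not_gt, this.ne']
    · have := (harctan (f x')).2
      simp [misrank, r, hx, hx', hxA, this.not_gt, this.ne']
    · have hx'A : x' ∉ A := fun h => hx' ⟨h, hx'B⟩
      norm_num [misrank, r, hx, hx', hxA, hx'A]
  refine ⟨r, (Real.measurable_arctan.comp hf).ite hS (measurable_const.ite hA measurable_const),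
    ?_⟩
  rw [misrankLoss, misrankLoss, ← lintegral_indicator hS]
  refine lintegral_congr_ae ?_
  filter_upwards [hPA] with x hxA
  rw [lintegral_congr_ae (hQB.mono fun x' hx'B => hpoint x hxA x' hx'B)]
  by_cases hx : x ∈ S
  · simp [hx, lintegral_indicator hS]
  · simp [hx]

lemma bddAbove_range_AUC {p : (Ω → ℝ) → Prop} (hp : ∀ r, p r → Measurable r)
    (P Q : Measure Ω) [IsProbabilityMeasure P] [IsProbabilityMeasure Q] :
    BddAbove (range fun r : Subtype p => AUC r.1 P Q) :=
  ⟨1, by rintro _ ⟨r, rfl⟩; exact (AUC_mem_Icc (hp r.1 r.2) P Q).2⟩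

/-- Compare `r` with the ranking that agrees with it on the overlap `A ∩ B` and separates
perfectly elsewhere: the latter avoids every misranking of `r` whose ID point lies in `U`. -/
lemma AUC_add_misrankLoss_le_iSup {P Q : Measure Ω} [IsProbabilityMeasure P]
    [IsProbabilityMeasure Q] {A B U : Set Ω} (hA : MeasurableSet A) (hB : MeasurableSet B)
    (hU : MeasurableSet U) (hPA : ∀ᵐ x ∂P, x ∈ A) (hQB : ∀ᵐ x ∂Q, x ∈ B)
    (hdisj : Disjoint (A ∩ B) U) {ν ν' : Measure Ω} (hν : ν ≤ P.restrict U) (hν' : ν' ≤ Q)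
    {r : Ω → ℝ} (hr : Measurable r) :
    AUC r P Q + (misrankLoss r ν ν').toReal
      ≤ ⨆ r' : {r' : Ω → ℝ // Measurable r'}, AUC r'.1 P Q := by
  obtain ⟨r₀, hr₀, hr₀_eq⟩ := exists_misrankLoss_eq_restrict_inter hA hB hPA hQB hr
  have hsplit : misrankLoss r (P.restrict (A ∩ B)) (Q.restrict (A ∩ B)) + misrankLoss r ν ν'
      ≤ misrankLoss r P Q :=
    calc _ ≤ misrankLoss r (P.restrict (A ∩ B)) Q + misrankLoss r (P.restrict U) Q :=
          add_le_add (misrankLoss_mono r le_rfl Measure.restrict_le_self)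
            (misrankLoss_mono r hν hν')
      _ = misrankLoss r (P.restrict (A ∩ B ∪ U)) Q := by
          rw [← misrankLoss_add_left, Measure.restrict_union hdisj hU]
      _ ≤ misrankLoss r P Q := misrankLoss_mono r Measure.restrict_le_self le_rfl
  have hfin := misrankLoss_ne_top r P Q
  have hsplit_real := ENNReal.toReal_mono hfin hsplit
  rw [ENNReal.toReal_add (ne_top_of_le_ne_top hfin (le_self_add.trans hsplit))
    (ne_top_of_le_ne_top hfin (le_add_self.trans hsplit))] at hsplit_real
  have hr₀_le := le_ciSup (bddAbove_range_AUC (fun _ h => h) P Q) ⟨r₀, hr₀⟩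
  rw [AUC_eq_one_sub_misrankLoss hr₀, hr₀_eq] at hr₀_le
  rw [AUC_eq_one_sub_misrankLoss hr]
  linarith

lemma exists_le_restrict_withDensity_le_restrict_withDensity {μ : Measure Ω}
    {g g' : Ω → ℝ≥0∞} (hg : Measurable g) (hg' : Measurable g') {T : Set Ω} (hT : MeasurableSet T)
    (hpos : ∀ x ∈ T, g' x ≠ 0) (hT0 : μ.withDensity g T ≠ 0) :
    ∃ ν : Measure Ω, ν ≤ (μ.withDensity g).restrict T ∧ ν ≤ (μ.withDensity g').restrict T ∧
      ν univ ≠ 0 := by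
  refine ⟨(μ.restrict T).withDensity (g ⊓ g'), ?_, ?_, fun h0 => hT0 ?_⟩
  · rw [restrict_withDensity hT]
    exact withDensity_mono (ae_of_all _ fun _ => inf_le_left)
  · rw [restrict_withDensity hT]
    exact withDensity_mono (ae_of_all _ fun _ => inf_le_right)
  · rw [withDensity_apply_eq_zero (hg.inf hg'), Measure.restrict_apply' hT] at h0
    rw [withDensity_apply_eq_zero hg]
    refine measure_mono_null ?_ h0
    rintro x ⟨hgx, hxT⟩
    exact ⟨⟨by simpa [hpos x hxT] using hgx, trivial⟩, hxT⟩

lemma exists_pos_le_regret_add_regret {μ : Measure Ω} {gI gO gO' : Ω → ℝ≥0∞}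
    (hgI : Measurable gI) (hgO : Measurable gO) (hgO' : Measurable gO')
    {P Q Q' : Measure Ω} [IsProbabilityMeasure P] [IsProbabilityMeasure Q]
    [IsProbabilityMeasure Q'] (hP : P = μ.withDensity gI) (hQ : Q = μ.withDensity gO)
    (hQ' : Q' = μ.withDensity gO')
    (hover : P ({x | 0 < gI x ∧ 0 < gO x} ∩ {x | 0 < gI x ∧ 0 < gO' x})
        < min (P {x | 0 < gI x ∧ 0 < gO x}) (P {x | 0 < gI x ∧ 0 < gO' x})) :
    ∃ c > 0, ∀ r : Ω → ℝ, Measurable r →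
      c ≤ (⨆ r' : {r' : Ω → ℝ // Measurable r'}, AUC r'.1 P Q) - AUC r P Q
        + ((⨆ r' : {r' : Ω → ℝ // Measurable r'}, AUC r'.1 P Q') - AUC r P Q') := by
  set S := {x | 0 < gI x ∧ 0 < gO x}
  set S' := {x | 0 < gI x ∧ 0 < gO' x}
  have hpos : ∀ {g : Ω → ℝ≥0∞}, Measurable g → MeasurableSet {x | 0 < g x} :=
    fun hg => hg measurableSet_Ioi
  have hae : ∀ {g : Ω → ℝ≥0∞}, Measurable g → ∀ᵐ x ∂μ.withDensity g, 0 < g x :=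
    fun hg => (ae_withDensity_iff hg).2 (ae_of_all _ fun _ => pos_iff_ne_zero.2)
  have hS : MeasurableSet S := (hpos hgI).inter (hpos hgO)
  have hS' : MeasurableSet S' := (hpos hgI).inter (hpos hgO')
  have hT0 : μ.withDensity gI (S \ S') ≠ 0 := fun h => (lt_min_iff.1 hover).1.ne <| by
    rw [← measure_inter_add_sdiff S hS' (μ := P), hP, h, add_zero]
  have hT'0 : μ.withDensity gI (S' \ S) ≠ 0 := fun h => (lt_min_iff.1 hover).2.ne <| by
    rw [← measure_inter_add_sdiff S' hS (μ := P), inter_comm, hP, h, add_zero]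
  obtain ⟨ν, hνP, hνQ, hν0⟩ := exists_le_restrict_withDensity_le_restrict_withDensity hgI hgO
    (hS.diff hS') (fun x hx => (hx.1.2).ne') hT0
  obtain ⟨ν', hν'P, hν'Q', hν'0⟩ := exists_le_restrict_withDensity_le_restrict_withDensity hgI
    hgO' (hS'.diff hS) (fun x hx => (hx.1.2).ne') hT'0
  rw [← hP] at hνP hν'P
  rw [← hQ] at hνQ
  rw [← hQ'] at hν'Q'
  have := isFiniteMeasure_of_le _ hνP
  have := isFiniteMeasure_of_le _ hν'P
  refine ⟨(ν univ * ν' univ).toReal,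
    ENNReal.toReal_pos (mul_ne_zero hν0 hν'0) (by finiteness), fun r hr => ?_⟩
  have hregret := AUC_add_misrankLoss_le_iSup (hpos hgI) (hpos hgO) (hS'.diff hS)
    (hP ▸ hae hgI) (hQ ▸ hae hgO) disjoint_sdiff_right hν'P (hνQ.trans Measure.restrict_le_self)
    hr
  have hregret' := AUC_add_misrankLoss_le_iSup (hpos hgI) (hpos hgO') (hS.diff hS')
    (hP ▸ hae hgI) (hQ' ▸ hae hgO') disjoint_sdiff_right hνP (hν'Q'.trans Measure.restrict_le_self)
    hr
  rw [← misrankLoss_add_misrankLoss_swap hr ν ν',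
    ENNReal.toReal_add (misrankLoss_ne_top r ν ν') (misrankLoss_ne_top r ν' ν)]
  linarith

lemma iSup_AUC_mix_lt {R : Set (Ω → ℝ)} [Nonempty R] (hR : ∀ r ∈ R, Measurable r)
    {P Q Q' : Measure Ω} [IsProbabilityMeasure P] [IsProbabilityMeasure Q]
    [IsProbabilityMeasure Q'] {α : ℝ} (hα : α ∈ Ioo 0 1) {c : ℝ} (hc : 0 < c)
    (hgap : ∀ r ∈ R, c ≤ (⨆ r : R, AUC r.1 P Q) - AUC r P Q
      + ((⨆ r : R, AUC r.1 P Q') - AUC r P Q')) :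
    ⨆ r : R, AUC r.1 P (ENNReal.ofReal α • Q + ENNReal.ofReal (1 - α) • Q')
      < α * (⨆ r : R, AUC r.1 P Q) + (1 - α) * (⨆ r : R, AUC r.1 P Q') := by
  set m := min α (1 - α)
  have hm : 0 < m := lt_min hα.1 (sub_pos.2 hα.2)
  refine (ciSup_le fun r => ?_).trans_lt (sub_lt_self _ (mul_pos hm hc) :
    _ - m * c < α * (⨆ r : R, AUC r.1 P Q) + (1 - α) * (⨆ r : R, AUC r.1 P Q'))
  have hle := le_ciSup (bddAbove_range_AUC hR P Q) r
  have hle' := le_ciSup (bddAbove_range_AUC hR P Q') r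
  rw [AUC_mix (hR r.1 r.2) P Q Q' (Ioo_subset_Icc_self hα)]
  nlinarith [mul_le_mul_of_nonneg_left (hgap r.1 r.2) hm.le,
    mul_nonneg (sub_nonneg.2 (min_le_left α (1 - α))) (sub_nonneg.2 hle),
    mul_nonneg (sub_nonneg.2 (min_le_right α (1 - α))) (sub_nonneg.2 hle')]

end Ranking

instance Domain.isProbabilityMeasure_margI (D : Domain 𝒳 K) : IsProbabilityMeasure D.margI :=
  have := D.probI
  Measure.isProbabilityMeasure_map measurable_fst.aemeasurable

instance Domain.isProbabilityMeasure_margO (D : Domain 𝒳 K) : IsProbabilityMeasure D.margO :=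
  have := D.probO
  Measure.isProbabilityMeasure_map measurable_fst.aemeasurable

instance isProbabilityMeasure_sampleMeasure (D : Domain 𝒳 K) (n : ℕ) :
    IsProbabilityMeasure (sampleMeasure D n) :=
  have := D.probI
  Measure.pi.instIsProbabilityMeasure _

lemma ConsistentAUC.integrable_AUC {𝒟 : Set (Domain 𝒳 K)} {R : Set (𝒳 → ℝ)}
    {A : Algorithm 𝒳 ℝ} {ε : ℕ → ℝ} (hA : ConsistentAUC 𝒟 R A ε) (hR : ∀ r ∈ R, Measurable r)
    {D : Domain 𝒳 K} (hD : D ∈ 𝒟) {n : ℕ} (hn : 1 ≤ n) :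
    Integrable (fun S => AUC (A n S) D.margI D.margO) (sampleMeasure D n) :=
  Integrable.of_bound (hA.2.1 D hD n hn).aestronglyMeasurable 1 <| ae_of_all _ fun S => by
    have h := AUC_mem_Icc (hR _ (hA.1 n hn S)) D.margI D.margO
    rw [Real.norm_eq_abs, abs_le]
    exact ⟨by linarith [h.1], h.2⟩

lemma ConsistentAUC.le_two_mul_of_regret_gap {𝒟 : Set (Domain 𝒳 K)} {R : Set (𝒳 → ℝ)}
    {A : Algorithm 𝒳 ℝ} {ε : ℕ → ℝ} (hA : ConsistentAUC 𝒟 R A ε) (hR : ∀ r ∈ R, Measurable r)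
    {D D' : Domain 𝒳 K} (hD : D ∈ 𝒟) (hD' : D' ∈ 𝒟) (hsame : D.DI = D'.DI) {c : ℝ}
    (hgap : ∀ r ∈ R, c ≤ (⨆ r : R, AUC r.1 D.margI D.margO) - AUC r D.margI D.margO
      + ((⨆ r : R, AUC r.1 D'.margI D'.margO) - AUC r D'.margI D'.margO))
    {n : ℕ} (hn : 1 ≤ n) : c ≤ 2 * ε n := by
  have hsample : sampleMeasure D' n = sampleMeasure D n := by
    unfold sampleMeasure
    rw [hsame]
  have hint : Integrable (fun S => (⨆ r : R, AUC r.1 D.margI D.margO)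
      - AUC (A n S) D.margI D.margO) (sampleMeasure D n) :=
    (integrable_const _).sub (hA.integrable_AUC hR hD hn)
  have hint' : Integrable (fun S => (⨆ r : R, AUC r.1 D'.margI D'.margO)
      - AUC (A n S) D'.margI D'.margO) (sampleMeasure D' n) :=
    (integrable_const _).sub (hA.integrable_AUC hR hD' hn)
  have hbound := hA.2.2 D hD n hn
  have hbound' := hA.2.2 D' hD' n hn
  rw [hsample] at hint' hbound'
  have hc : c ≤ ∫ S, ((⨆ r : R, AUC r.1 D.margI D.margO) - AUC (A n S) D.margI D.margO
      + ((⨆ r : R, AUC r.1 D'.margI D'.margO) - AUC (A n S) D'.margI D'.margO))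
      ∂(sampleMeasure D n) := by
    simpa using integral_mono (integrable_const c) (hint.add hint')
      fun S => hgap _ (hA.1 n hn S)
  rw [integral_add hint hint'] at hc
  linarith

lemma not_learnableAUC_of_regret_gap {𝒟 : Set (Domain 𝒳 K)} {R : Set (𝒳 → ℝ)}
    (hR : ∀ r ∈ R, Measurable r) {D D' : Domain 𝒳 K} (hD : D ∈ 𝒟) (hD' : D' ∈ 𝒟)
    (hsame : D.DI = D'.DI) {c : ℝ} (hc : 0 < c)
    (hgap : ∀ r ∈ R, c ≤ (⨆ r : R, AUC r.1 D.margI D.margO) - AUC r D.margI D.margO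
      + ((⨆ r : R, AUC r.1 D'.margI D'.margO) - AUC r D'.margI D'.margO)) :
    ¬ LearnableAUC 𝒟 R := by
  rintro ⟨ε, -, hε, A, hA⟩
  have hc0 : c ≤ 2 * 0 := ge_of_tendsto (hε.const_mul 2) <| eventually_atTop.2
    ⟨1, fun n hn => hA.le_two_mul_of_regret_gap hR hD hD' hsame hgap hn⟩
  linarith

/-- Lemma 4 / `T5_auc` of the paper.  Suppose `D, D' ∈ 𝒟` share the same
ID joint distribution and have marginals with densities `g_I, g_O, g_O'` w.r.t. a common
measure `μ`, the suprema of the AUC over `R` coincide with the suprema over all measurable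
ranking functions for both OOD marginals, and the ID mass of the intersection of the two
overlap sets is smaller than the ID mass of each.  Then the linear condition under AUC
fails, and OOD detection is not learnable under AUC in `𝒟` for `R`. -/
theorem stmt7 {d K : ℕ} (X : Set (EuclideanSpace ℝ (Fin d)))
    (R : Set (↥X → ℝ)) (hR : ∀ r ∈ R, Measurable r)
    (𝒟 : Set (Domain ↥X K))
    (D D' : Domain ↥X K) (hD : D ∈ 𝒟) (hD' : D' ∈ 𝒟) (hsame : D.DI = D'.DI)
    (μ : Measure ↥X) (gI gO gO' : ↥X → ℝ≥0∞)
    (hgI : Measurable gI) (hgO : Measurable gO) (hgO' : Measurable gO')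
    (hdI : D.margI = μ.withDensity gI)
    (hdO : D.margO = μ.withDensity gO)
    (hdO' : D'.margO = μ.withDensity gO')
    (hsup : (⨆ r : R, AUC r.1 D.margI D.margO)
        = ⨆ r : {r : ↥X → ℝ // Measurable r}, AUC r.1 D.margI D.margO)
    (hsup' : (⨆ r : R, AUC r.1 D.margI D'.margO)
        = ⨆ r : {r : ↥X → ℝ // Measurable r}, AUC r.1 D.margI D'.margO)
    (hover : D.margI ({x | 0 < gI x ∧ 0 < gO x} ∩ {x | 0 < gI x ∧ 0 < gO' x})
        < min (D.margI {x | 0 < gI x ∧ 0 < gO x}) (D.margI {x | 0 < gI x ∧ 0 < gO' x})) :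
    (∃ α ∈ Set.Ico (0 : ℝ) 1,
        α * (⨆ r : R, AUC r.1 D.margI D.margO)
            + (1 - α) * (⨆ r : R, AUC r.1 D.margI D'.margO)
          ≠ ⨆ r : R, AUC r.1 D.margI
              (ENNReal.ofReal α • D.margO + ENNReal.ofReal (1 - α) • D'.margO)) ∧
    ¬ LearnableAUC 𝒟 R := by
  obtain ⟨c, hc, hkey⟩ := exists_pos_le_regret_add_regret hgI hgO hgO' hdI hdO hdO' hover
  have hgap : ∀ r ∈ R, c ≤ (⨆ r : R, AUC r.1 D.margI D.margO) - AUC r D.margI D.margO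
      + ((⨆ r : R, AUC r.1 D.margI D'.margO) - AUC r D.margI D'.margO) := fun r hr => by
    rw [hsup, hsup']
    exact hkey r (hR r hr)
  have : Nonempty R := by
    by_contra hempty
    have := not_nonempty_iff.1 hempty
    have hhalf : AUC (fun _ => 0) D.margI D.margO
        ≤ ⨆ r : {r : ↥X → ℝ // Measurable r}, AUC r.1 D.margI D.margO :=
      le_ciSup (bddAbove_range_AUC (fun _ h => h) D.margI D.margO) ⟨_, measurable_const⟩
    rw [AUC_const, ← hsup, Real.iSup_of_isEmpty] at hhalf
    norm_num at hhalf
  have hmargI : D'.margI = D.margI := by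
    rw [Domain.margI, Domain.margI, hsame]
  refine ⟨⟨1 / 2, by norm_num, (iSup_AUC_mix_lt hR (by norm_num) hc hgap).ne'⟩,
    not_learnableAUC_of_regret_gap hR hD hD' hsame hc ?_⟩
  rwa [hmargI]

end OODF

end
end

section
/- Let R be a ranking function space. If there exist x, x' ∈ X and r, r' ∈ R such that r(x) > r(x') and r'(x') > r'(x), then OOD detection is not learnable under AUC in the total space 𝒟^all (the domain space consisting of all domains) for R; that is, the learnability of OOD detection under AUC is not distribution-free for R. -/
open MeasureTheory Filter Set
open scoped ENNReal NNReal

noncomputable section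

namespace OODF

variable {𝒳 : Type*} [MeasurableSpace 𝒳] {K : ℕ}

/-!
Two domains with the same ID distribution — uniform on `{x, x'}` — but OOD marginals `δ_{x'}`
and `δ_x` produce the same samples, so an algorithm cannot tell them apart. For every ranking
function the two AUCs add up to at most `1`, whereas `r` and `r'` attain `3/4` on them. Hence
the two expected excess AUCs add up to at least `1/2` at every sample size, and the rate cannot
tend to `0`.
-/

lemma abs_AUC_le_one (r : 𝒳 → ℝ) (P Q : Measure 𝒳) [IsProbabilityMeasure P]
    [IsProbabilityMeasure Q] : |AUC r P Q| ≤ 1 := by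
  have hunit : ∀ (μ : Measure 𝒳) [IsProbabilityMeasure μ] (f : 𝒳 → ℝ),
      (∀ x, 0 ≤ f x ∧ f x ≤ 1) → 0 ≤ ∫ x, f x ∂μ ∧ ∫ x, f x ∂μ ≤ 1 := by
    intro μ _ f hf
    refine ⟨integral_nonneg fun x => (hf x).1, ?_⟩
    have := norm_integral_le_of_norm_le_const (μ := μ) (C := 1) <| .of_forall fun x => by
      rw [Real.norm_eq_abs, abs_of_nonneg (hf x).1]; exact (hf x).2
    simpa using (le_abs_self _).trans this
  obtain ⟨h0, h1⟩ : 0 ≤ AUC r P Q ∧ AUC r P Q ≤ 1 :=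
    hunit P _ fun x => hunit Q _ fun x' => by
      constructor <;> split_ifs <;> linarith
  exact abs_le.2 ⟨by linarith, h1⟩

instance (D : Domain 𝒳 K) : IsProbabilityMeasure D.margI :=
  haveI := D.probI; Measure.isProbabilityMeasure_map measurable_fst.aemeasurable

instance (D : Domain 𝒳 K) : IsProbabilityMeasure D.margO :=
  haveI := D.probO; Measure.isProbabilityMeasure_map measurable_fst.aemeasurable

instance (D : Domain 𝒳 K) (n : ℕ) : IsProbabilityMeasure (sampleMeasure D n) := by
  have := D.probI; unfold sampleMeasure; infer_instance

/-- Le Cam's two-point argument: domains sharing their ID distribution are sampled alike, so an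
algorithm cannot beat the best ranking function on both when no ranking function is good on
both at once. -/
lemma iSup_add_iSup_sub_le_two_mul_rate {𝒟 : Set (Domain 𝒳 K)} {R : Set (𝒳 → ℝ)}
    {A : Algorithm 𝒳 ℝ} {ε : ℕ → ℝ} (hA : ConsistentAUC 𝒟 R A ε) {D D' : Domain 𝒳 K}
    (hD : D ∈ 𝒟) (hD' : D' ∈ 𝒟) (hDI : D.DI = D'.DI) {s : ℝ}
    (hs : ∀ g ∈ R, AUC g D.margI D.margO + AUC g D'.margI D'.margO ≤ s) {n : ℕ} (hn : 1 ≤ n) :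
    (⨆ r : R, AUC r.1 D.margI D.margO) + (⨆ r : R, AUC r.1 D'.margI D'.margO) - s
      ≤ 2 * ε n := by
  obtain ⟨hmem, hmeas, hexcess⟩ := hA
  have hsample : sampleMeasure D' n = sampleMeasure D n := by
    simp only [sampleMeasure, hDI]
  have hint : ∀ E ∈ 𝒟, Integrable (fun S => AUC (A n S) E.margI E.margO) (sampleMeasure E n) :=
    fun E hE => .of_bound (hmeas E hE n hn).aestronglyMeasurable 1
      (.of_forall fun S => abs_AUC_le_one _ _ _)
  have hI := hint D hD
  have hI' := hint D' hD'
  have h := hexcess D hD n hn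
  have h' := hexcess D' hD' n hn
  rw [integral_sub (integrable_const _) hI, integral_const, probReal_univ, one_smul] at h
  rw [integral_sub (integrable_const _) hI', integral_const, probReal_univ, one_smul,
    hsample] at h'
  rw [hsample] at hI'
  have hsum : ∫ S, AUC (A n S) D.margI D.margO ∂(sampleMeasure D n)
      + ∫ S, AUC (A n S) D'.margI D'.margO ∂(sampleMeasure D n) ≤ s := by
    rw [← integral_add hI hI']
    calc _ ≤ ∫ _, s ∂(sampleMeasure D n) :=
          integral_mono (hI.add hI') (integrable_const s) fun S => hs _ (hmem n hn S)
      _ = s := by simp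
  linarith

lemma not_learnableAUC_of_DI_eq {𝒟 : Set (Domain 𝒳 K)} {R : Set (𝒳 → ℝ)} {D D' : Domain 𝒳 K}
    (hD : D ∈ 𝒟) (hD' : D' ∈ 𝒟) (hDI : D.DI = D'.DI) {s : ℝ}
    (hs : ∀ g ∈ R, AUC g D.margI D.margO + AUC g D'.margI D'.margO ≤ s)
    (hgap : s < (⨆ r : R, AUC r.1 D.margI D.margO) + (⨆ r : R, AUC r.1 D'.margI D'.margO)) :
    ¬ LearnableAUC 𝒟 R := by
  rintro ⟨ε, -, hε, A, hA⟩
  obtain ⟨n, hsmall, hn⟩ :=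
    ((hε.eventually (gt_mem_nhds (half_pos (sub_pos.2 hgap)))).and (eventually_ge_atTop 1)).exists
  linarith [iSup_add_iSup_sub_le_two_mul_rate hA hD hD' hDI hs hn]

section TwoPoint

def twoPointDomain (hK : 1 ≤ K) (a b : 𝒳) : Domain 𝒳 K where
  DI := (1/2 : ℝ≥0∞) • Measure.dirac (a, 1) + (1/2 : ℝ≥0∞) • Measure.dirac (b, 1)
  DO := Measure.dirac (b, K + 1)
  prior := 0
  probI := ⟨by simp [ENNReal.inv_two_add_inv_two]⟩
  probO := inferInstance
  suppI := by
    have hmeas : MeasurableSet {p : 𝒳 × ℕ | p.2 ∉ Icc 1 K} := measurable_snd measurableSet_Icc.compl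
    rw [Measure.add_apply, Measure.smul_apply, Measure.smul_apply, Measure.dirac_apply' _ hmeas,
      Measure.dirac_apply' _ hmeas]
    simp [Nat.one_le_iff_ne_zero.mp hK]
  suppO := by
    have hmeas : MeasurableSet {p : 𝒳 × ℕ | p.2 ≠ K + 1} :=
      measurable_snd (measurableSet_singleton _).compl
    simp [Measure.dirac_apply' _ hmeas]
  prior_mem := ⟨le_rfl, zero_lt_one⟩

lemma twoPointDomain_DI_comm (hK : 1 ≤ K) (a b : 𝒳) :
    (twoPointDomain hK a b).DI = (twoPointDomain hK b a).DI :=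
  add_comm _ _

lemma margI_twoPointDomain (hK : 1 ≤ K) (a b : 𝒳) :
    (twoPointDomain hK a b).margI
      = (1/2 : ℝ≥0∞) • Measure.dirac a + (1/2 : ℝ≥0∞) • Measure.dirac b := by
  rw [Domain.margI, twoPointDomain, Measure.map_add _ _ measurable_fst, Measure.map_smul,
    Measure.map_smul, Measure.map_dirac' measurable_fst, Measure.map_dirac' measurable_fst]

lemma margO_twoPointDomain (hK : 1 ≤ K) (a b : 𝒳) :
    (twoPointDomain hK a b).margO = Measure.dirac b :=
  Measure.map_dirac' measurable_fst _

variable [MeasurableSingletonClass 𝒳]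

lemma integral_half_dirac_add_half_dirac (f : 𝒳 → ℝ) (a b : 𝒳) :
    ∫ x, f x ∂((1/2 : ℝ≥0∞) • Measure.dirac a + (1/2 : ℝ≥0∞) • Measure.dirac b)
      = f a / 2 + f b / 2 := by
  have hint : ∀ c, Integrable f (Measure.dirac c) := fun c =>
    (integrable_const (f c)).congr (ae_eq_dirac f).symm
  rw [integral_add_measure ((hint a).smul_measure (by norm_num))
      ((hint b).smul_measure (by norm_num)),
    integral_smul_measure, integral_smul_measure, integral_dirac, integral_dirac]
  norm_num [ENNReal.toReal_div]
  ring

lemma AUC_twoPointDomain (hK : 1 ≤ K) (g : 𝒳 → ℝ) (a b : 𝒳) :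
    AUC g (twoPointDomain hK a b).margI (twoPointDomain hK a b).margO
      = 1/4 + 1/2 * (if g b < g a then 1 else 0) + 1/4 * (if g a = g b then 1 else 0) := by
  rw [margI_twoPointDomain, margO_twoPointDomain, AUC, integral_half_dirac_add_half_dirac,
    integral_dirac, integral_dirac, if_neg (lt_irrefl _), if_pos rfl]
  ring

lemma AUC_twoPointDomain_add_swap_le_one (hK : 1 ≤ K) (g : 𝒳 → ℝ) (a b : 𝒳) :
    AUC g (twoPointDomain hK a b).margI (twoPointDomain hK a b).margO
      + AUC g (twoPointDomain hK b a).margI (twoPointDomain hK b a).margO ≤ 1 := by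
  rw [AUC_twoPointDomain, AUC_twoPointDomain]
  split_ifs <;> linarith

lemma iSup_AUC_twoPointDomain {R : Set (𝒳 → ℝ)} (hK : 1 ≤ K) {r : 𝒳 → ℝ} (hr : r ∈ R)
    {a b : 𝒳} (hab : r b < r a) :
    ⨆ g : R, AUC g.1 (twoPointDomain hK a b).margI (twoPointDomain hK a b).margO = 3/4 := by
  have hle : ∀ g : 𝒳 → ℝ,
      AUC g (twoPointDomain hK a b).margI (twoPointDomain hK a b).margO ≤ 3/4 := fun g => by
    rw [AUC_twoPointDomain]; split_ifs <;> linarith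
  have hr_eq : AUC r (twoPointDomain hK a b).margI (twoPointDomain hK a b).margO = 3/4 := by
    rw [AUC_twoPointDomain, if_pos hab, if_neg hab.ne']; norm_num
  have : Nonempty R := ⟨⟨r, hr⟩⟩
  refine le_antisymm (ciSup_le fun g => hle g.1) ?_
  rw [← hr_eq]
  exact le_ciSup (f := fun g : R => AUC g.1 _ _) ⟨3/4, by rintro _ ⟨g, rfl⟩; exact hle g.1⟩ ⟨r, hr⟩

end TwoPoint

theorem stmt8_general {d K : ℕ} (hK : 1 ≤ K) (X : Set (EuclideanSpace ℝ (Fin d)))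
    (R : Set (↥X → ℝ))
    (hnontriv : ∃ x x' : ↥X, ∃ r ∈ R, ∃ r' ∈ R, r x' < r x ∧ r' x < r' x') :
    ¬ LearnableAUC (Set.univ : Set (Domain ↥X K)) R := by
  obtain ⟨x, x', r, hr, r', hr', hrx, hr'x⟩ := hnontriv
  refine not_learnableAUC_of_DI_eq (mem_univ (twoPointDomain hK x x'))
    (mem_univ (twoPointDomain hK x' x)) (twoPointDomain_DI_comm hK x x')
    (fun g _ => AUC_twoPointDomain_add_swap_le_one hK g x x') ?_
  rw [iSup_AUC_twoPointDomain hK hr hrx, iSup_AUC_twoPointDomain hK hr' hr'x]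
  norm_num

/-- Theorem 6 / `T4_auc` of the paper: impossibility for the total space
under AUC.  If there are `x, x' ∈ X` and `r, r' ∈ R` with `r(x) > r(x')` and
`r'(x') > r'(x)`, then OOD detection is not learnable under AUC in the total space (the
space of all domains) for `R`. -/
theorem stmt8 {d K : ℕ} (hK : 1 ≤ K) (X : Set (EuclideanSpace ℝ (Fin d)))
    (R : Set (↥X → ℝ)) (hR : ∀ r ∈ R, Measurable r)
    (hnontriv : ∃ x x' : ↥X, ∃ r ∈ R, ∃ r' ∈ R, r x' < r x ∧ r' x < r' x') :
    ¬ LearnableAUC (Set.univ : Set (Domain ↥X K)) R :=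
  stmt8_general hK X R hnontriv

end OODF

end
end

section
/- Let K = 1 (so Y = {1} and Y_all = {1,2}, where 1 denotes ID and 2 denotes OOD) and let X be finite. Suppose the hypothesis space H satisfies: for every x ∈ X there exists h_x ∈ H with h_x(x) = 2, and the constant function h^in ≡ 1 belongs to H. Then OOD detection is learnable under risk in the separate space 𝒟^s for H if and only if H_all ∖ {h^out} ⊆ H, where H_all is the set of all functions X → {1,2} and h^out is the constant function h^out ≡ 2. -/
/-
If `H` contains every binary `h ≠ h^out`, the rule "label a point ID iff it occurs in the
sample" is consistent on `𝒟^s`: OOD points have ID-mass zero, so almost surely they are never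
sampled and never mislabelled, while an ID point of mass `p` is missed with probability
`(1 - p)^n`, costing at most `p (1 - p)^n ≤ 1 / (n + 1)`.

Conversely, let `h₀ ≠ h^out` be binary and not in `H`; since `h^in ∈ H`, both `I = {h₀ = 1}`
and `C = {h₀ = 2}` are nonempty. All domains whose ID marginal is uniform on `I` yield the same
samples. With prior `0`, `h^in` has risk `0`, so the learned `A S` is nearly ID on `I`; with OOD
marginal `δ_z` (`z ∈ C`) and prior `α`, some `h ∈ H` has risk at most `(1 - α) ℓ(2,1)`, so `A S`
is nearly OOD at `z`. But `A S ∈ H` differs from `h₀` somewhere, which bounds one of these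
finitely many expected risks from below; letting `n → ∞` and then `α → 1` is a contradiction.
-/

open MeasureTheory Filter Set
open scoped ENNReal NNReal

noncomputable section

namespace OODF

variable {𝒳 : Type*} [MeasurableSpace 𝒳] {K : ℕ}

open ProbabilityTheory

section General

attribute [instance] Domain.probI Domain.probO

instance inst_s11 (D : Domain 𝒳 K) (n : ℕ) : IsProbabilityMeasure (sampleMeasure D n) := by
  unfold sampleMeasure
  infer_instance

instance inst_s11_2 (D : Domain 𝒳 K) : IsProbabilityMeasure D.margI :=
  Measure.isProbabilityMeasure_map measurable_fst.aemeasurable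

instance inst_s11_3 (D : Domain 𝒳 K) : IsProbabilityMeasure D.margO :=
  Measure.isProbabilityMeasure_map measurable_fst.aemeasurable

lemma risk_nonneg {ℓ : ℕ → ℕ → ℝ} (hl : ∀ y₁ y₂, 0 ≤ ℓ y₁ y₂) (D : Domain 𝒳 K) (h : 𝒳 → ℕ) :
    0 ≤ risk ℓ D h :=
  integral_nonneg fun _ => hl _ _

lemma ConsistentRisk.integral_risk_le {ℓ : ℕ → ℕ → ℝ} (hl : ∀ y₁ y₂, 0 ≤ ℓ y₁ y₂)
    {𝒟 : Set (Domain 𝒳 K)} {H : Set (𝒳 → ℕ)} {A : Algorithm 𝒳 ℕ} {ε : ℕ → ℝ}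
    (hA : ConsistentRisk ℓ 𝒟 H A ε) {D : Domain 𝒳 K} (hD : D ∈ 𝒟) {n : ℕ} (hn : 1 ≤ n)
    (hint : Integrable (fun S => risk ℓ D (A n S)) (sampleMeasure D n)) {h : 𝒳 → ℕ} (hh : h ∈ H) :
    ∫ S, risk ℓ D (A n S) ∂(sampleMeasure D n) ≤ risk ℓ D h + ε n := by
  have hbound := hA.2.2 D hD n hn
  rw [integral_sub hint (integrable_const _), integral_const, probReal_univ, one_smul] at hbound
  have hinf : ⨅ g : H, risk ℓ D g ≤ risk ℓ D h :=
    ciInf_le (f := fun g : H => risk ℓ D g) ⟨0, by rintro _ ⟨g, rfl⟩; exact risk_nonneg hl D g⟩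
      ⟨h, hh⟩
  linarith

lemma mSupport_eq_of_discreteTopology {α : Type*} [TopologicalSpace α] [DiscreteTopology α]
    [MeasurableSpace α] (μ : Measure α) : mSupport μ = {x | μ {x} ≠ 0} := by
  ext x
  refine ⟨fun hx => (hx {x} (isOpen_discrete _ |>.mem_nhds rfl)).ne', fun hx U hU => ?_⟩
  exact (pos_iff_ne_zero.mpr hx).trans_le
    (measure_mono (singleton_subset_iff.mpr (mem_of_mem_nhds hU)))

lemma mem_separateSpace_iff [TopologicalSpace 𝒳] [DiscreteTopology 𝒳] {D : Domain 𝒳 K} :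
    D ∈ separateSpace 𝒳 K ↔ ∀ x, D.margO {x} = 0 ∨ D.margI {x} = 0 := by
  simp only [separateSpace, mem_ofPred_eq, mSupport_eq_of_discreteTopology,
    eq_empty_iff_forall_notMem, mem_inter_iff, not_and_or, ne_eq, not_not]

lemma eq_map_prodMk_of_ae_snd_eq {α β : Type*} [MeasurableSpace α] [MeasurableSpace β]
    {μ : Measure (α × β)} {c : β} (hc : ∀ᵐ p ∂μ, p.2 = c) : μ = (μ.map Prod.fst).map (·, c) := by
  calc μ = μ.map ((·, c) ∘ Prod.fst) := by
        conv_lhs => rw [← Measure.map_id (μ := μ)]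
        exact Measure.map_congr <| by
          filter_upwards [hc] with p hp
          exact Prod.ext rfl hp
    _ = (μ.map Prod.fst).map (·, c) :=
      (Measure.map_map measurable_prodMk_right measurable_fst).symm

lemma integrable_of_countable_of_abs_le {α : Type*} [MeasurableSpace α] [Countable α]
    [MeasurableSingletonClass α] {μ : Measure α} [IsFiniteMeasure μ] {f : α → ℝ} (C : ℝ)
    (hf : ∀ a, |f a| ≤ C) : Integrable f μ :=
  .of_bound (measurable_of_countable f).aestronglyMeasurable C (ae_of_all _ hf)

lemma integrable_loss_apply {ℓ : ℕ → ℕ → ℝ} (hl : ∀ y₁ y₂, 0 ≤ ℓ y₁ y₂) {β ι : Type*}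
    [MeasurableSpace ι] [Countable ι] [MeasurableSingletonClass ι] (μ : Measure ι)
    [IsFiniteMeasure μ] {g : ι → β → ℕ} (hg : ∀ i x, g i x = 1 ∨ g i x = 2) (z : β) (y : ℕ) :
    Integrable (fun i => ℓ (g i z) y) μ :=
  integrable_of_countable_of_abs_le (ℓ 1 y + ℓ 2 y) fun i => by
    rcases hg i z with e | e <;> simp [e, abs_of_nonneg, hl]

lemma mul_one_sub_pow_le {p : ℝ} (hp0 : 0 ≤ p) (hp1 : p ≤ 1) (n : ℕ) :
    p * (1 - p) ^ n ≤ 1 / (n + 1) := by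
  have hbern : 1 + n * p ≤ (1 + p) ^ n := one_add_mul_le_pow (by linarith) n
  have hsq : (1 + p) ^ n * (1 - p) ^ n ≤ 1 := by
    rw [← mul_pow]; exact pow_le_one₀ (by nlinarith) (by nlinarith)
  have hpow : 0 ≤ (1 - p) ^ n := pow_nonneg (by linarith) n
  rw [le_div_iff₀ (by positivity)]
  nlinarith

lemma uniformOn_real_singleton {α : Type*} [MeasurableSpace α] [MeasurableSingletonClass α]
    {I : Finset α} {x : α} (hx : x ∈ I) :
    (uniformOn (I : Set α)).real {x} = (I.card : ℝ)⁻¹ := by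
  classical
  rw [measureReal_def, ← Finset.coe_singleton, uniformOn_apply_finset,
    Finset.inter_singleton_of_mem hx, Finset.card_singleton]
  simp

lemma measureReal_singleton_mul_le_integral {α : Type*} [MeasurableSpace α] [Fintype α]
    [MeasurableSingletonClass α] {P : Measure α} [IsFiniteMeasure P] {f : α → ℝ} (hf : 0 ≤ f)
    (x : α) : P.real {x} * f x ≤ ∫ y, f y ∂P := by
  rw [integral_fintype .of_finite]
  exact Finset.single_le_sum (f := fun y => P.real {y} • f y)
    (fun y _ => smul_nonneg measureReal_nonneg (hf y)) (Finset.mem_univ x)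

lemma one_le_integral_add_sum_integral {ι β : Type*} [MeasurableSpace ι] {μ : Measure ι}
    [IsProbabilityMeasure μ] {f : ι → ℝ} {g : β → ι → ℝ} {C : Finset β} (hf : Integrable f μ)
    (hg : ∀ z, Integrable (g z) μ) (hpt : ∀ i, 1 ≤ f i + ∑ z ∈ C, g z i) :
    1 ≤ ∫ i, f i ∂μ + ∑ z ∈ C, ∫ i, g z i ∂μ := by
  have hsum : Integrable (fun i => ∑ z ∈ C, g z i) μ := integrable_finsetSum _ fun z _ => hg z
  rw [← integral_finsetSum _ fun z _ => hg z, ← integral_add hf hsum]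
  simpa using integral_mono (integrable_const 1) (hf.add hsum) hpt

lemma not_forall_one_le_of_tendsto {ε : ℕ → ℝ} (hε : Tendsto ε atTop (nhds 0)) (a b c : ℝ) :
    ¬ ∀ α ∈ Ioo (0 : ℝ) 1, ∀ n, 1 ≤ n → 1 ≤ a * ε n + b * (((1 - α) * c + ε n) / α) := by
  intro h
  have hn (α : ℝ) (hα : α ∈ Ioo (0 : ℝ) 1) : 1 ≤ b * ((1 - α) * c / α) := by
    have hlim := (hε.const_mul a).add (((hε.const_add ((1 - α) * c)).div_const α).const_mul b)
    simp only [mul_zero, zero_add, add_zero] at hlim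
    exact ge_of_tendsto hlim (eventually_atTop.2 ⟨1, h α hα⟩)
  have hcont : ContinuousAt (fun α : ℝ => b * ((1 - α) * c / α)) 1 := by
    fun_prop (disch := norm_num)
  have hlim := hcont.tendsto.mono_left (nhdsWithin_le_nhds (s := Iio 1))
  have := ge_of_tendsto hlim (eventually_of_mem (Ioo_mem_nhdsLT zero_lt_one) hn)
  norm_num at this

end General

section Binary

namespace Domain

lemma ae_snd_DI (D : Domain 𝒳 1) : ∀ᵐ p ∂D.DI, p.2 = 1 := by
  rw [ae_iff]
  convert D.suppI using 3
  simp

lemma ae_snd_DO (D : Domain 𝒳 1) : ∀ᵐ p ∂D.DO, p.2 = 2 :=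
  ae_iff.mpr D.suppO

lemma DI_eq_map (D : Domain 𝒳 1) : D.DI = D.margI.map (·, 1) :=
  eq_map_prodMk_of_ae_snd_eq D.ae_snd_DI

lemma DO_eq_map (D : Domain 𝒳 1) : D.DO = D.margO.map (·, 2) :=
  eq_map_prodMk_of_ae_snd_eq D.ae_snd_DO

def ofMarginals (P Q : Measure 𝒳) [IsProbabilityMeasure P] [IsProbabilityMeasure Q] (α : ℝ)
    (hα : α ∈ Ico (0 : ℝ) 1) : Domain 𝒳 1 where
  DI := P.map (·, 1)
  DO := Q.map (·, 2)
  prior := α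
  probI := Measure.isProbabilityMeasure_map measurable_prodMk_right.aemeasurable
  probO := Measure.isProbabilityMeasure_map measurable_prodMk_right.aemeasurable
  suppI := (Measure.map_apply measurable_prodMk_right
    (measurable_snd (.of_discrete (s := {n : ℕ | n ∉ Icc 1 1})))).trans (by simp)
  suppO := (Measure.map_apply measurable_prodMk_right
    (measurable_snd (.of_discrete (s := {n : ℕ | n ≠ 1 + 1})))).trans (by simp)
  prior_mem := hα

variable {P Q : Measure 𝒳} [IsProbabilityMeasure P] [IsProbabilityMeasure Q] {α : ℝ}
  {hα : α ∈ Ico (0 : ℝ) 1}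

@[simp]
lemma margI_ofMarginals : (ofMarginals P Q α hα).margI = P := by
  rw [margI, ofMarginals, Measure.map_map measurable_fst measurable_prodMk_right]
  exact Measure.map_id

@[simp]
lemma margO_ofMarginals : (ofMarginals P Q α hα).margO = Q := by
  rw [margO, ofMarginals, Measure.map_map measurable_fst measurable_prodMk_right]
  exact Measure.map_id

lemma sampleMeasure_ofMarginals (n : ℕ) :
    sampleMeasure (ofMarginals P Q α hα) n = Measure.pi fun _ : Fin n => P.map (·, 1) :=
  rfl

lemma ofMarginals_dirac_mem_separateSpace [MeasurableSingletonClass 𝒳] [TopologicalSpace 𝒳]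
    [DiscreteTopology 𝒳] {z : 𝒳} (hz : P {z} = 0) :
    ofMarginals P (Measure.dirac z) α hα ∈ separateSpace 𝒳 1 := by
  refine mem_separateSpace_iff.mpr fun x => ?_
  rw [margI_ofMarginals, margO_ofMarginals]
  by_cases hx : x = z
  · exact .inr (hx ▸ hz)
  · exact .inl (by simp [Ne.symm hx])

end Domain

variable [Finite 𝒳] [MeasurableSingletonClass 𝒳]

lemma risk_eq_integral_marginals (ℓ : ℕ → ℕ → ℝ) (D : Domain 𝒳 1) (h : 𝒳 → ℕ) :
    risk ℓ D h = (1 - D.prior) * ∫ x, ℓ (h x) 1 ∂D.margI + D.prior * ∫ x, ℓ (h x) 2 ∂D.margO := by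
  have hg : Measurable fun p : 𝒳 × ℕ => ℓ (h p.1) p.2 := measurable_of_countable _
  have hmap (μ : Measure 𝒳) [IsProbabilityMeasure μ] (c : ℕ) :
      Integrable (fun p : 𝒳 × ℕ => ℓ (h p.1) p.2) (μ.map (·, c)) ∧
        ∫ p, ℓ (h p.1) p.2 ∂(μ.map (·, c)) = ∫ x, ℓ (h x) c ∂μ :=
    ⟨(integrable_map_measure hg.aestronglyMeasurable measurable_prodMk_right.aemeasurable).mpr
        .of_finite,
      integral_map measurable_prodMk_right.aemeasurable hg.aestronglyMeasurable⟩
  have := D.prior_mem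
  rw [risk, Domain.joint, D.DI_eq_map, D.DO_eq_map,
    integral_add_measure ((hmap _ 1).1.smul_measure ENNReal.ofReal_ne_top)
      ((hmap _ 2).1.smul_measure ENNReal.ofReal_ne_top),
    integral_smul_measure, integral_smul_measure, (hmap _ 1).2, (hmap _ 2).2,
    ENNReal.toReal_ofReal (by linarith [this.2]), ENNReal.toReal_ofReal this.1, smul_eq_mul,
    smul_eq_mul]

end Binary

section Backward

section inSampleRule

variable {Ω : Type*}

def unseen (n : ℕ) (x : Ω) : Set (Fin n → Ω × ℕ) := {S | ∀ i, (S i).1 ≠ x}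

open Classical in
def inSampleRule : Algorithm Ω ℕ := fun n S x => if S ∈ unseen n x then 2 else 1

variable {n : ℕ} {S : Fin n → Ω × ℕ} {x : Ω}

lemma inSampleRule_of_mem (hS : S ∈ unseen n x) : inSampleRule n S x = 2 := if_pos hS

lemma inSampleRule_of_notMem (hS : S ∉ unseen n x) : inSampleRule n S x = 1 := if_neg hS

lemma inSampleRule_mem (hn : 1 ≤ n) (S : Fin n → Ω × ℕ) :
    inSampleRule n S ∈ {h : Ω → ℕ | ∀ x, h x = 1 ∨ h x = 2} \ {fun _ => 2} := by
  refine ⟨fun x => ?_, fun hconst => ?_⟩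
  · by_cases hS : S ∈ unseen n x
    · exact .inr (inSampleRule_of_mem hS)
    · exact .inl (inSampleRule_of_notMem hS)
  · have hseen : S ∉ unseen n (S ⟨0, hn⟩).1 := fun hS => hS ⟨0, hn⟩ rfl
    have := congrFun hconst (S ⟨0, hn⟩).1
    rw [inSampleRule_of_notMem hseen] at this
    exact absurd this (by norm_num)

end inSampleRule

variable [MeasurableSingletonClass 𝒳]

lemma sampleMeasure_real_unseen (D : Domain 𝒳 K) (n : ℕ) (x : 𝒳) :
    (sampleMeasure D n).real (unseen n x) = (1 - D.margI.real {x}) ^ n := by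
  have hset : unseen n x =
      Set.univ.pi fun _ => (Prod.fst ⁻¹' {x})ᶜ := by
    ext S; simp [unseen]
  have hfst : MeasurableSet (Prod.fst ⁻¹' {x} : Set (𝒳 × ℕ)) :=
    measurable_fst (measurableSet_singleton x)
  rw [hset, measureReal_def, sampleMeasure, Measure.pi_pi, Finset.prod_const, Finset.card_univ,
    Fintype.card_fin, ENNReal.toReal_pow, ← measureReal_def, measureReal_compl hfst, probReal_univ,
    Domain.margI, map_measureReal_apply measurable_fst (measurableSet_singleton x)]

variable [Fintype 𝒳] {ℓ : ℕ → ℕ → ℝ}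

lemma risk_inSampleRule (h11 : ℓ 1 1 = 0) (h22 : ℓ 2 2 = 0) (D : Domain 𝒳 1) {n : ℕ}
    (S : Fin n → 𝒳 × ℕ) :
    risk ℓ D (inSampleRule n S) =
      (1 - D.prior) * ∑ x, D.margI.real {x} * (unseen n x).indicator (fun _ => ℓ 2 1) S +
        D.prior * ∑ x, D.margO.real {x} * (unseen n x)ᶜ.indicator (fun _ => ℓ 1 2) S := by
  rw [risk_eq_integral_marginals, integral_fintype .of_finite, integral_fintype .of_finite]
  congr 2 <;> refine Finset.sum_congr rfl fun x _ => ?_ <;> by_cases hS : S ∈ unseen n x <;>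
    simp [inSampleRule_of_mem, inSampleRule_of_notMem, hS, h11, h22]

lemma integral_risk_inSampleRule (h11 : ℓ 1 1 = 0) (h22 : ℓ 2 2 = 0) (D : Domain 𝒳 1) (n : ℕ) :
    Integrable (fun S => risk ℓ D (inSampleRule n S)) (sampleMeasure D n) ∧
    ∫ S, risk ℓ D (inSampleRule n S) ∂(sampleMeasure D n) =
      (1 - D.prior) * ∑ x, D.margI.real {x} * (ℓ 2 1 * (1 - D.margI.real {x}) ^ n) +
        D.prior * ∑ x, D.margO.real {x} * (ℓ 1 2 * (1 - (1 - D.margI.real {x}) ^ n)) := by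
  have hind (s : Set (Fin n → 𝒳 × ℕ)) (c : ℝ) :
      Integrable (s.indicator fun _ => c) (sampleMeasure D n) :=
    (integrable_const c).indicator .of_discrete
  have hI : Integrable (fun S => ∑ x, D.margI.real {x} * (unseen n x).indicator (fun _ => ℓ 2 1) S)
      (sampleMeasure D n) :=
    integrable_finsetSum _ fun x _ => (hind _ _).const_mul _
  have hO : Integrable (fun S => ∑ x, D.margO.real {x} * (unseen n x)ᶜ.indicator (fun _ => ℓ 1 2) S)
      (sampleMeasure D n) :=
    integrable_finsetSum _ fun x _ => (hind _ _).const_mul _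
  simp_rw [risk_inSampleRule h11 h22]
  refine ⟨(hI.const_mul _).add (hO.const_mul _), ?_⟩
  rw [integral_add (hI.const_mul _) (hO.const_mul _), integral_const_mul, integral_const_mul,
    integral_finsetSum _ fun x _ => (hind _ _).const_mul _,
    integral_finsetSum _ fun x _ => (hind _ _).const_mul _]
  simp only [integral_const_mul, integral_indicator_const _ MeasurableSet.of_discrete,
    measureReal_compl MeasurableSet.of_discrete, probReal_univ,
    sampleMeasure_real_unseen, smul_eq_mul, mul_comm]

lemma integral_risk_inSampleRule_le [TopologicalSpace 𝒳] [DiscreteTopology 𝒳]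
    (hl : ∀ y₁ y₂, 0 ≤ ℓ y₁ y₂) (h11 : ℓ 1 1 = 0) (h22 : ℓ 2 2 = 0) {D : Domain 𝒳 1}
    (hD : D ∈ separateSpace 𝒳 1) (n : ℕ) :
    ∫ S, risk ℓ D (inSampleRule n S) ∂(sampleMeasure D n) ≤ Fintype.card 𝒳 * ℓ 2 1 / (n + 1) := by
  have hO : ∑ x, D.margO.real {x} * (ℓ 1 2 * (1 - (1 - D.margI.real {x}) ^ n)) = 0 := by
    refine Finset.sum_eq_zero fun x _ => ?_
    rcases mem_separateSpace_iff.mp hD x with hx | hx <;> simp [measureReal_def, hx]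
  have hterm (x : 𝒳) : 0 ≤ D.margI.real {x} * (ℓ 2 1 * (1 - D.margI.real {x}) ^ n) ∧
      D.margI.real {x} * (ℓ 2 1 * (1 - D.margI.real {x}) ^ n) ≤ ℓ 2 1 / (n + 1) := by
    have hp0 : 0 ≤ D.margI.real {x} := measureReal_nonneg
    have hp1 : D.margI.real {x} ≤ 1 := measureReal_le_one
    refine ⟨mul_nonneg hp0 (mul_nonneg (hl 2 1) (pow_nonneg (by linarith) n)), ?_⟩
    rw [mul_left_comm, div_eq_mul_one_div]
    exact mul_le_mul_of_nonneg_left (mul_one_sub_pow_le hp0 hp1 n) (hl 2 1)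
  have hI : ∑ x, D.margI.real {x} * (ℓ 2 1 * (1 - D.margI.real {x}) ^ n) ≤
      Fintype.card 𝒳 * ℓ 2 1 / (n + 1) :=
    (Finset.sum_le_sum fun x _ => (hterm x).2).trans_eq (by simp [mul_div_assoc])
  have hI0 := Finset.sum_nonneg fun x (_ : x ∈ Finset.univ) => (hterm x).1
  rw [(integral_risk_inSampleRule h11 h22 D n).2, hO, mul_zero, add_zero]
  nlinarith [D.prior_mem.1]

lemma learnableRisk_separateSpace_of_subset [TopologicalSpace 𝒳] [DiscreteTopology 𝒳]
    (hl : ∀ y₁ y₂, 0 ≤ ℓ y₁ y₂) (h11 : ℓ 1 1 = 0) (h22 : ℓ 2 2 = 0) {H : Set (𝒳 → ℕ)}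
    (hsub : {h : 𝒳 → ℕ | ∀ x, h x = 1 ∨ h x = 2} \ {fun _ => 2} ⊆ H) :
    LearnableRisk ℓ (separateSpace 𝒳 1) H := by
  have hC : 0 ≤ Fintype.card 𝒳 * ℓ 2 1 := mul_nonneg (Nat.cast_nonneg _) (hl 2 1)
  refine ⟨fun n => Fintype.card 𝒳 * ℓ 2 1 / (n + 1),
    fun m n hmn => div_le_div_of_nonneg_left hC (by positivity) (by gcongr), ?_,
    inSampleRule, fun n hn S => hsub (inSampleRule_mem hn S),
    fun D _ n _ => measurable_of_countable _, fun D hD n _ => ?_⟩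
  · simpa [div_eq_mul_inv] using (tendsto_one_div_add_atTop_nhds_zero_nat (𝕜 := ℝ)).const_mul
      (Fintype.card 𝒳 * ℓ 2 1)
  · have hinf : 0 ≤ ⨅ h : H, risk ℓ D h := Real.iInf_nonneg fun h => risk_nonneg hl D h
    rw [integral_sub (integral_risk_inSampleRule h11 h22 D n).1 (integrable_const _),
      integral_const, probReal_univ, one_smul]
    linarith [integral_risk_inSampleRule_le hl h11 h22 hD n]

end Backward

section Forward

variable [Fintype 𝒳] [MeasurableSingletonClass 𝒳] {ℓ : ℕ → ℕ → ℝ}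

lemma integral_loss_le (hl : ∀ y₁ y₂, 0 ≤ ℓ y₁ y₂) (P : Measure 𝒳) [IsProbabilityMeasure P]
    {h : 𝒳 → ℕ} (hb : ∀ x, h x = 1 ∨ h x = 2) (y : ℕ) :
    ∫ x, ℓ (h x) y ∂P ≤ ℓ 1 y + ℓ 2 y := by
  refine (integral_mono .of_finite (integrable_const (ℓ 1 y + ℓ 2 y)) fun x => ?_).trans (by simp)
  rcases hb x with e | e <;> simp [e, hl]

lemma integrable_integral_loss (hl : ∀ y₁ y₂, 0 ≤ ℓ y₁ y₂) {ι : Type*} [MeasurableSpace ι]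
    [Countable ι] [MeasurableSingletonClass ι] (μ : Measure ι) [IsFiniteMeasure μ]
    (P : Measure 𝒳) [IsProbabilityMeasure P] {g : ι → 𝒳 → ℕ}
    (hg : ∀ i x, g i x = 1 ∨ g i x = 2) (y : ℕ) :
    Integrable (fun i => ∫ x, ℓ (g i x) y ∂P) μ :=
  integrable_of_countable_of_abs_le (ℓ 1 y + ℓ 2 y) fun i => by
    rw [abs_of_nonneg (integral_nonneg fun _ => hl _ _)]
    exact integral_loss_le hl P (hg i) y

variable {P : Measure 𝒳} [IsProbabilityMeasure P] {z : 𝒳} {α : ℝ}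

lemma risk_ofMarginals_dirac (hα : α ∈ Ico (0 : ℝ) 1) (h : 𝒳 → ℕ) :
    risk ℓ (Domain.ofMarginals P (Measure.dirac z) α hα) h =
      (1 - α) * ∫ x, ℓ (h x) 1 ∂P + α * ℓ (h z) 2 := by
  rw [risk_eq_integral_marginals, Domain.margI_ofMarginals, Domain.margO_ofMarginals,
    integral_dirac]
  rfl

lemma ConsistentRisk.integral_le_of_ofMarginals_dirac [TopologicalSpace 𝒳] [DiscreteTopology 𝒳]
    (hl : ∀ y₁ y₂, 0 ≤ ℓ y₁ y₂) {H : Set (𝒳 → ℕ)} (hH : ∀ h ∈ H, ∀ x, h x = 1 ∨ h x = 2)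
    {A : Algorithm 𝒳 ℕ} {ε : ℕ → ℝ} (hA : ConsistentRisk ℓ (separateSpace 𝒳 1) H A ε)
    (hz : P {z} = 0) (hα : α ∈ Ico (0 : ℝ) 1) {n : ℕ} (hn : 1 ≤ n) {h : 𝒳 → ℕ} (hh : h ∈ H) :
    (1 - α) * ∫ S, ∫ x, ℓ (A n S x) 1 ∂P ∂(Measure.pi fun _ : Fin n => P.map (·, 1)) +
        α * ∫ S, ℓ (A n S z) 2 ∂(Measure.pi fun _ : Fin n => P.map (·, 1)) ≤
      (1 - α) * ∫ x, ℓ (h x) 1 ∂P + α * ℓ (h z) 2 + ε n := by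
  have hbin (S : Fin n → 𝒳 × ℕ) := hH _ (hA.1 n hn S)
  have hin := integrable_integral_loss hl (Measure.pi fun _ : Fin n => P.map (·, 1)) P hbin 1
  have hout := integrable_loss_apply hl (Measure.pi fun _ : Fin n => P.map (·, 1)) hbin z 2
  have hrisk := hA.integral_risk_le hl (Domain.ofMarginals_dirac_mem_separateSpace (hα := hα) hz) hn
    (by simp_rw [risk_ofMarginals_dirac]; exact (hin.const_mul _).add (hout.const_mul _)) hh
  simp only [risk_ofMarginals_dirac, Domain.sampleMeasure_ofMarginals] at hrisk
  rwa [integral_add (hin.const_mul _) (hout.const_mul _), integral_const_mul,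
    integral_const_mul] at hrisk

lemma one_le_of_ne_of_binary (hl : ∀ y₁ y₂, 0 ≤ ℓ y₁ y₂) (h12 : 0 < ℓ 1 2) (h21 : 0 < ℓ 2 1)
    {I C : Finset 𝒳} {h₀ h : 𝒳 → ℕ} (hI : ∀ x, h₀ x = 1 → x ∈ I) (hC : ∀ x, h₀ x = 2 → x ∈ C)
    (hb₀ : ∀ x, h₀ x = 1 ∨ h₀ x = 2) (hb : ∀ x, h x = 1 ∨ h x = 2) (hne : h ≠ h₀) :
    1 ≤ I.card / ℓ 2 1 * ∫ x, ℓ (h x) 1 ∂uniformOn (I : Set 𝒳) + ∑ z ∈ C, ℓ (h z) 2 / ℓ 1 2 := by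
  obtain ⟨x, hx⟩ := Function.ne_iff.mp hne
  have hID : 0 ≤ ∫ x, ℓ (h x) 1 ∂uniformOn (I : Set 𝒳) := integral_nonneg fun _ => hl _ _
  have hOOD : 0 ≤ ∑ z ∈ C, ℓ (h z) 2 / ℓ 1 2 :=
    Finset.sum_nonneg fun _ _ => div_nonneg (hl _ _) h12.le
  rcases hb₀ x with h₀x | h₀x <;> rw [h₀x] at hx
  · have hxI := hI x h₀x
    have hcard : (0 : ℝ) < I.card := Nat.cast_pos.mpr (Finset.card_pos.mpr ⟨x, hxI⟩)
    have hsingle := measureReal_singleton_mul_le_integral (P := uniformOn (I : Set 𝒳))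
      (f := fun y => ℓ (h y) 1) (fun _ => hl _ _) x
    rw [uniformOn_real_singleton hxI, (hb x).resolve_left hx] at hsingle
    calc (1 : ℝ) = I.card / ℓ 2 1 * ((I.card : ℝ)⁻¹ * ℓ 2 1) := by field_simp
      _ ≤ I.card / ℓ 2 1 * ∫ x, ℓ (h x) 1 ∂uniformOn (I : Set 𝒳) := by gcongr
      _ ≤ _ := le_add_of_nonneg_right hOOD
  · calc (1 : ℝ) = ℓ (h x) 2 / ℓ 1 2 := by rw [(hb x).resolve_right hx, div_self h12.ne']
      _ ≤ ∑ z ∈ C, ℓ (h z) 2 / ℓ 1 2 :=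
        Finset.single_le_sum (fun _ _ => div_nonneg (hl _ _) h12.le) (hC x h₀x)
      _ ≤ _ := le_add_of_nonneg_left (mul_nonneg (by positivity) hID)

lemma one_le_of_consistentRisk [TopologicalSpace 𝒳] [DiscreteTopology 𝒳]
    (hl : ∀ y₁ y₂, 0 ≤ ℓ y₁ y₂) (h11 : ℓ 1 1 = 0) (h22 : ℓ 2 2 = 0) (h12 : 0 < ℓ 1 2)
    (h21 : 0 < ℓ 2 1) {H : Set (𝒳 → ℕ)} (hH : ∀ h ∈ H, ∀ x, h x = 1 ∨ h x = 2)
    (hsepH : ∀ x, ∃ h ∈ H, h x = 2) (hin : (fun _ => 1) ∈ H) {A : Algorithm 𝒳 ℕ}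
    {ε : ℕ → ℝ} (hA : ConsistentRisk ℓ (separateSpace 𝒳 1) H A ε) {h₀ : 𝒳 → ℕ}
    (hb₀ : ∀ x, h₀ x = 1 ∨ h₀ x = 2) (h₀H : h₀ ∉ H) {I C : Finset 𝒳}
    (hI : ∀ x, x ∈ I ↔ h₀ x = 1) (hC : ∀ x, x ∈ C ↔ h₀ x = 2) (hIne : I.Nonempty)
    (hCne : C.Nonempty) {α : ℝ} (hα : α ∈ Ioo (0 : ℝ) 1) {n : ℕ} (hn : 1 ≤ n) :
    1 ≤ I.card / ℓ 2 1 * ε n + C.card / ℓ 1 2 * (((1 - α) * ℓ 2 1 + ε n) / α) := by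
  set P := uniformOn (I : Set 𝒳)
  have := isProbabilityMeasure_uniformOn I.finite_toSet hIne
  have hPz (z : 𝒳) (hz : z ∈ C) : P {z} = 0 := by
    refine (uniformOn_eq_zero_iff I.finite_toSet).mpr (Set.eq_empty_of_forall_notMem ?_)
    rintro x ⟨hxI, rfl⟩
    have := (hC _).1 hz
    simp [(hI _).1 hxI] at this
  have := Measure.isProbabilityMeasure_map (μ := P) (measurable_prodMk_right (y := 1)).aemeasurable
  set μ := Measure.pi fun _ : Fin n => P.map (·, 1)
  have hbin (S : Fin n → 𝒳 × ℕ) := hH _ (hA.1 n hn S)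
  obtain ⟨z₀, hz₀⟩ := hCne
  have hID : ∫ S, ∫ x, ℓ (A n S x) 1 ∂P ∂μ ≤ ε n := by
    simpa [h11] using
      hA.integral_le_of_ofMarginals_dirac hl hH (hPz z₀ hz₀) ⟨le_rfl, one_pos⟩ hn hin
  have hOOD (z : 𝒳) (hz : z ∈ C) : ∫ S, ℓ (A n S z) 2 ∂μ ≤ ((1 - α) * ℓ 2 1 + ε n) / α := by
    obtain ⟨h, hH', hhz⟩ := hsepH z
    have hrisk := hA.integral_le_of_ofMarginals_dirac hl hH (hPz z hz) ⟨hα.1.le, hα.2⟩ hn hH'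
    have hID₀ : 0 ≤ ∫ S, ∫ x, ℓ (A n S x) 1 ∂P ∂μ :=
      integral_nonneg fun _ => integral_nonneg fun _ => hl _ _
    have hh : ∫ x, ℓ (h x) 1 ∂P ≤ ℓ 2 1 := by simpa [h11] using integral_loss_le hl P (hH h hH') 1
    rw [hhz, h22] at hrisk
    rw [le_div_iff₀ hα.1]
    nlinarith [hα.1, hα.2]
  have hexp := one_le_integral_add_sum_integral (C := C)
    ((integrable_integral_loss hl μ P hbin 1).const_mul (I.card / ℓ 2 1))
    (fun z => (integrable_loss_apply hl μ hbin z 2).div_const (ℓ 1 2))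
    fun S => one_le_of_ne_of_binary hl h12 h21 (fun x => (hI x).2) (fun x => (hC x).2) hb₀
      (hbin S) fun e => h₀H (e ▸ hA.1 n hn S)
  simp only [integral_const_mul, integral_div] at hexp
  calc (1 : ℝ) ≤ _ := hexp
    _ ≤ I.card / ℓ 2 1 * ε n + ∑ z ∈ C, ((1 - α) * ℓ 2 1 + ε n) / α / ℓ 1 2 := by
      gcongr with z hz
      exact hOOD z hz
    _ = _ := by rw [Finset.sum_const, nsmul_eq_mul]; ring

lemma subset_of_learnableRisk [TopologicalSpace 𝒳] [DiscreteTopology 𝒳]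
    (hl : ∀ y₁ y₂, 0 ≤ ℓ y₁ y₂) (h11 : ℓ 1 1 = 0) (h22 : ℓ 2 2 = 0) (h12 : 0 < ℓ 1 2)
    (h21 : 0 < ℓ 2 1) {H : Set (𝒳 → ℕ)} (hH : ∀ h ∈ H, ∀ x, h x = 1 ∨ h x = 2)
    (hsepH : ∀ x, ∃ h ∈ H, h x = 2) (hin : (fun _ => 1) ∈ H)
    (hlearn : LearnableRisk ℓ (separateSpace 𝒳 1) H) :
    {h : 𝒳 → ℕ | ∀ x, h x = 1 ∨ h x = 2} \ {fun _ => 2} ⊆ H := by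
  rintro h₀ ⟨hb₀, hne₂⟩
  by_contra h₀H
  obtain ⟨ε, -, hε, A, hA⟩ := hlearn
  obtain ⟨x₁, hx₁⟩ : ∃ x, h₀ x = 1 := by
    by_contra! hall
    exact hne₂ (funext fun x => (hb₀ x).resolve_left (hall x))
  obtain ⟨z₀, hz₀⟩ : ∃ z, h₀ z = 2 := by
    by_contra! hall
    exact h₀H (by convert hin using 1; exact funext fun x => (hb₀ x).resolve_right (hall x))
  exact not_forall_one_le_of_tendsto hε _ _ _ fun α hα n hn =>
    one_le_of_consistentRisk hl h11 h22 h12 h21 hH hsepH hin hA hb₀ h₀H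
      (I := Finset.univ.filter (h₀ · = 1)) (C := Finset.univ.filter (h₀ · = 2)) (by simp)
      (by simp) ⟨x₁, by simpa⟩ ⟨z₀, by simpa⟩ hα hn

end Forward

theorem stmt11_general {d : ℕ} (X : Set (EuclideanSpace ℝ (Fin d))) [Finite ↥X]
    (ℓ : ℕ → ℕ → ℝ)
    (hl_nonneg : ∀ y₁ y₂, 0 ≤ ℓ y₁ y₂)
    (hl_zero : ∀ y₁ ∈ Set.Icc 1 2, ∀ y₂ ∈ Set.Icc 1 2, (ℓ y₁ y₂ = 0 ↔ y₁ = y₂))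
    (H : Set (↥X → ℕ)) (hH : ∀ h ∈ H, ∀ x, h x = 1 ∨ h x = 2)
    (hsepH : ∀ x : ↥X, ∃ h ∈ H, h x = 2)
    (hin : (fun _ : ↥X => 1) ∈ H) :
    LearnableRisk ℓ (separateSpace ↥X 1) H ↔
      {h : ↥X → ℕ | ∀ x, h x = 1 ∨ h x = 2} \ {fun _ => 2} ⊆ H := by
  have := Fintype.ofFinite X
  have h1 : (1 : ℕ) ∈ Set.Icc 1 2 := by simp
  have h2 : (2 : ℕ) ∈ Set.Icc 1 2 := by simp
  have h11 : ℓ 1 1 = 0 := (hl_zero 1 h1 1 h1).mpr rfl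
  have h22 : ℓ 2 2 = 0 := (hl_zero 2 h2 2 h2).mpr rfl
  have h12 : 0 < ℓ 1 2 :=
    (hl_nonneg 1 2).lt_of_ne' fun h => absurd ((hl_zero 1 h1 2 h2).mp h) (by norm_num)
  have h21 : 0 < ℓ 2 1 :=
    (hl_nonneg 2 1).lt_of_ne' fun h => absurd ((hl_zero 2 h2 1 h1).mp h) (by norm_num)
  exact ⟨subset_of_learnableRisk hl_nonneg h11 h22 h12 h21 hH hsepH hin,
    learnableRisk_separateSpace_of_subset hl_nonneg h11 h22⟩

/-- Theorem 9 / `T13` of the paper.  Let `K = 1` (label `1` = ID,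
label `2` = OOD) and let `X` be finite.  Suppose every point can be labeled OOD by some
hypothesis in `H` and the constant ID function `h^in ≡ 1` belongs to `H`.  Then OOD
detection is learnable under risk in the separate space `𝒟^s` for `H` iff `H` contains
all binary hypotheses except possibly the constant OOD function `h^out ≡ 2`. -/
theorem stmt11 {d : ℕ} (X : Set (EuclideanSpace ℝ (Fin d))) [Finite ↥X]
    (ℓ : ℕ → ℕ → ℝ)
    (hl_nonneg : ∀ y₁ y₂, 0 ≤ ℓ y₁ y₂)
    (hl_zero : ∀ y₁ ∈ Set.Icc 1 2, ∀ y₂ ∈ Set.Icc 1 2, (ℓ y₁ y₂ = 0 ↔ y₁ = y₂))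
    (hl_bdd : ∃ B, ∀ y₁ ∈ Set.Icc 1 2, ∀ y₂ ∈ Set.Icc 1 2, ℓ y₁ y₂ ≤ B)
    (H : Set (↥X → ℕ)) (hH : ∀ h ∈ H, ∀ x, h x = 1 ∨ h x = 2)
    (hsepH : ∀ x : ↥X, ∃ h ∈ H, h x = 2)
    (hin : (fun _ : ↥X => 1) ∈ H) :
    LearnableRisk ℓ (separateSpace ↥X 1) H ↔
      {h : ↥X → ℕ | ∀ x, h x = 1 ∨ h x = 2} \ {fun _ => 2} ⊆ H :=
  stmt11_general X ℓ hl_nonneg hl_zero H hH hsepH hin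

end OODF

end
end

section
/- Let D be a probability measure on a measurable space X and let C₁,…,C_r be measurable sets covering X (⋃_{i=1}^r C_i = X). For an i.i.d. sample S = (x₁,…,x_n) drawn from D^n, E_{S ~ D^n}[ Σ_{i : C_i ∩ {x₁,…,x_n} = ∅} D(C_i) ] ≤ r/(e·n), where e is Euler's number and the sum ranges over those indices i for which no sample point lies in C_i. -/
/-!
A cell of mass `p` is missed by all `n` sample points with probability `(1 - p) ^ n`, so by
linearity the expectation equals `∑ pᵢ (1 - pᵢ) ^ n`. Each term is at most
`p e^{-pn} = (pn e^{-pn}) / n ≤ 1 / (e n)`, because `x e^{-x} ≤ e⁻¹`.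
-/

open MeasureTheory

lemma mul_one_sub_pow_le_one_div_exp_one_mul {p : ℝ} (hp0 : 0 ≤ p) (hp1 : p ≤ 1) {n : ℕ}
    (hn : 0 < n) : p * (1 - p) ^ n ≤ 1 / (Real.exp 1 * n) := by
  have hn' : (0 : ℝ) < n := by exact_mod_cast hn
  calc p * (1 - p) ^ n ≤ p * Real.exp (-p) ^ n := by
        gcongr; exact Real.one_sub_le_exp_neg p
    _ = p * n * Real.exp (-(p * n)) / n := by
        rw [← Real.exp_nat_mul]; field_simp
    _ ≤ Real.exp (-1) / n := by gcongr; exact Real.mul_exp_neg_le_exp_neg_one _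
    _ = 1 / (Real.exp 1 * n) := by rw [Real.exp_neg]; field_simp

section Sample

variable {ι α : Type*} [Fintype ι] [MeasurableSpace α] {s : Set α}

lemma measurableSet_forall_notMem (hs : MeasurableSet s) :
    MeasurableSet {S : ι → α | ∀ j, S j ∉ s} := by
  simp_rw [Set.ofPred_forall]
  exact .iInter fun j => hs.compl.preimage (measurable_pi_apply j)

lemma measureReal_pi_forall_notMem (D : Measure α) [IsProbabilityMeasure D]
    (hs : MeasurableSet s) :
    (Measure.pi fun _ : ι => D).real {S | ∀ j, S j ∉ s} = (1 - D.real s) ^ Fintype.card ι := by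
  have hpi : {S : ι → α | ∀ j, S j ∉ s} = Set.univ.pi fun _ => sᶜ := by ext; simp
  rw [hpi, measureReal_def, Measure.pi_pi, Finset.prod_const, ENNReal.toReal_pow,
    ← measureReal_def, probReal_compl_eq_one_sub hs, Finset.card_univ]

end Sample

theorem stmt18_general {α : Type*} [MeasurableSpace α] (D : Measure α) [IsProbabilityMeasure D]
    (r : ℕ) (C : Fin r → Set α) (hCmeas : ∀ i, MeasurableSet (C i))
    (n : ℕ) (hn : 1 ≤ n) :
    ∫ S : Fin n → α,
        (∑ i : Fin r,
          Set.indicator {S' : Fin n → α | ∀ j, S' j ∉ C i}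
            (fun _ => (D (C i)).toReal) S)
      ∂(Measure.pi fun _ : Fin n => D) ≤ r / (Real.exp 1 * n) := by
  have hmiss := fun i => measurableSet_forall_notMem (ι := Fin n) (hCmeas i)
  rw [integral_finsetSum _ fun i _ => (integrable_const _).indicator (hmiss i)]
  calc ∑ i, ∫ S, {S' : Fin n → α | ∀ j, S' j ∉ C i}.indicator (fun _ => D.real (C i)) S
          ∂(Measure.pi fun _ : Fin n => D)
      = ∑ i, D.real (C i) * (1 - D.real (C i)) ^ n := by
        refine Finset.sum_congr rfl fun i _ => ?_
        rw [integral_indicator_const _ (hmiss i), measureReal_pi_forall_notMem D (hCmeas i),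
          Fintype.card_fin, smul_eq_mul, mul_comm]
    _ ≤ ∑ _i : Fin r, 1 / (Real.exp 1 * n) :=
        Finset.sum_le_sum fun i _ =>
          mul_one_sub_pow_le_one_div_exp_one_mul measureReal_nonneg measureReal_le_one hn
    _ = r / (Real.exp 1 * n) := by simp [div_eq_mul_inv]

/-- Lemma 5 / `L14` of the paper, motivated by Lemma 19.2 of
Shalev-Shwartz & Ben-David.  Let `D` be a probability measure on `X` and let
`C₁,…,C_r` be measurable sets covering `X`.  For an i.i.d. sample `S = (x₁,…,x_n)` drawn
from `D^n`, the expected total `D`-mass of the cells not hit by the sample is at most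
`r / (e·n)`. -/
theorem stmt18 {α : Type*} [MeasurableSpace α] (D : Measure α) [IsProbabilityMeasure D]
    (r : ℕ) (C : Fin r → Set α) (hCmeas : ∀ i, MeasurableSet (C i))
    (hcover : ⋃ i, C i = Set.univ) (n : ℕ) (hn : 1 ≤ n) :
    ∫ S : Fin n → α,
        (∑ i : Fin r,
          Set.indicator {S' : Fin n → α | ∀ j, S' j ∉ C i}
            (fun _ => (D (C i)).toReal) S)
      ∂(Measure.pi fun _ : Fin n => D) ≤ r / (Real.exp 1 * n) :=
  stmt18_general D r C hCmeas n hn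
end
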